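/- arXiv:1101.3854 — 6 statements merged into one kernel-verified Lean document; each statement's English description precedes it below -/
import Mathlib

section
/- Let V be a vector space over ℚ with dim V = 2 and let G be a finite subgroup of GL(V) such that the fixed subspace V^G is zero. Then there exists a subgroup G₀ of G such that V^{G₀} = 0 and the order of G₀ is 2 or 3. -/
open Polynomial Module



section HelpersA

variable {V : Type*} [AddCommGroup V] [Module ℚ V]

private lemma span_pair_eq_top (hdim : Module.finrank ℚ V = 2) {x y : V}
    (hind : ∀ s t : ℚ, s • x + t • y = 0 → s = 0 ∧ t = 0) :
    Submodule.span ℚ ({x, y} : Set V) = ⊤ := by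
  haveI : Module.Finite ℚ V := Module.finite_of_finrank_eq_succ hdim
  have hli : LinearIndependent ℚ ![x, y] := LinearIndependent.pair_iff.mpr hind
  have h1 : Module.finrank ℚ ↥(Submodule.span ℚ (Set.range ![x, y])) = 2 := by
    rw [finrank_span_eq_card hli]; simp
  rw [show Set.range ![x, y] = ({x, y} : Set V) from Matrix.range_cons_cons_empty x y ![]] at h1
  exact Submodule.eq_top_of_finrank_eq (by rw [h1, hdim])

private lemma indep_of_no_eig {f : Module.End ℚ V} {w : V} (hw : w ≠ 0)
    (heig : ∀ c : ℚ, f w ≠ c • w) :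
    ∀ s t : ℚ, s • w + t • (f w) = 0 → s = 0 ∧ t = 0 := by
  intro s t hst
  by_cases ht : t = 0
  · subst ht
    rw [zero_smul, add_zero] at hst
    rcases smul_eq_zero.mp hst with h | h
    · exact ⟨h, rfl⟩
    · exact absurd h hw
  · exfalso
    apply heig (-s / t)
    have h1 : t • (f w) = (-s) • w := by
      rw [neg_smul]
      exact eq_neg_of_add_eq_zero_right hst
    have h2 : f w = t⁻¹ • ((-s) • w) := by
      rw [← h1, inv_smul_smul₀ ht]
    rw [h2, smul_smul]
    congr 1
    field_simp

private lemma end_eq_zero_aux (hdim : Module.finrank ℚ V = 2) {f b : Module.End ℚ V}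
    (hcomm : b * f = f * b) {w : V} (hw : w ≠ 0) (hbw : b w = 0)
    (heig : ∀ c : ℚ, f w ≠ c • w) : b = 0 := by
  have hspan := span_pair_eq_top hdim (indep_of_no_eig hw heig)
  ext u
  have hu : u ∈ Submodule.span ℚ ({w, f w} : Set V) := hspan ▸ Submodule.mem_top
  obtain ⟨s, t, hst⟩ := Submodule.mem_span_pair.mp hu
  have hbfw : b (f w) = 0 := by
    have h1 : (b * f) w = (f * b) w := by rw [hcomm]
    simpa [Module.End.mul_apply, hbw] using h1
  rw [← hst]
  simp [map_add, map_smul, hbw, hbfw]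

private lemma order_four (hdim : Module.finrank ℚ V = 2) {f : Module.End ℚ V}
    (hf4 : f ^ 4 = 1) (hf2 : f ^ 2 ≠ 1) : f ^ 2 = -1 := by
  obtain ⟨z, hz⟩ : ∃ z : V, (f ^ 2 - 1 : Module.End ℚ V) z ≠ 0 := by
    by_contra h
    push_neg at h
    apply hf2
    ext u
    have := h u
    rwa [LinearMap.sub_apply, sub_eq_zero, Module.End.one_apply] at this
  set w : V := (f ^ 2 - 1 : Module.End ℚ V) z with hwdef
  have hw : w ≠ 0 := hz
  have hmul : (f ^ 2 + 1) * (f ^ 2 - 1) = 0 := by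
    have h1 : (f ^ 2 + 1) * (f ^ 2 - 1) = f ^ 4 - 1 := by noncomm_ring
    rw [h1, hf4, sub_self]
  have hbw : (f ^ 2 + 1 : Module.End ℚ V) w = 0 := by
    rw [hwdef, ← Module.End.mul_apply, hmul, LinearMap.zero_apply]
  have heig : ∀ c : ℚ, f w ≠ c • w := by
    intro c hc
    have hf2w : (f ^ 2) w = (c * c) • w := by
      rw [pow_two, Module.End.mul_apply, hc, map_smul, hc, smul_smul]
    have h2 : (c * c + 1) • w = 0 := by
      have h3 := hbw
      rw [LinearMap.add_apply, hf2w, Module.End.one_apply] at h3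
      rw [add_smul, one_smul]
      exact h3
    rcases smul_eq_zero.mp h2 with h | h
    · nlinarith [sq_nonneg c]
    · exact hw h
  have hcomm : (f ^ 2 + 1) * f = f * (f ^ 2 + 1) := by noncomm_ring
  have hb0 : f ^ 2 + 1 = 0 := end_eq_zero_aux hdim hcomm hw hbw heig
  exact eq_neg_of_add_eq_zero_left hb0

end HelpersA



section Helpers2

variable {V : Type*} [AddCommGroup V] [Module ℚ V]

private lemma odd_prime_order (hdim : Module.finrank ℚ V = 2) {f : Module.End ℚ V} {p : ℕ}
    (hp : p.Prime) (hp2 : p ≠ 2) (hfp : f ^ p = 1) (hf1 : f ≠ 1) :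
    p = 3 ∧ f * f + f + 1 = 0 := by
  haveI : Fact p.Prime := ⟨hp⟩
  have hpodd : Odd p := hp.odd_of_ne_two hp2
  obtain ⟨z, hz⟩ : ∃ z : V, (f - 1 : Module.End ℚ V) z ≠ 0 := by
    by_contra h
    push_neg at h
    apply hf1
    ext u
    have := h u
    rwa [LinearMap.sub_apply, sub_eq_zero, Module.End.one_apply] at this
  set w : V := (f - 1 : Module.End ℚ V) z with hwdef
  have hw : w ≠ 0 := hz
  set b : Module.End ℚ V := ∑ i ∈ Finset.range p, f ^ i with hbdef
  have hmul : b * (f - 1) = 0 := by rw [hbdef, geom_sum_mul, hfp, sub_self]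
  have hbw : b w = 0 := by rw [hwdef, ← Module.End.mul_apply, hmul, LinearMap.zero_apply]
  have heig : ∀ c : ℚ, f w ≠ c • w := by
    intro c hc
    have hpow : ∀ i : ℕ, (f ^ i) w = (c ^ i) • w := by
      intro i
      induction i with
      | zero => simp
      | succ i ih =>
        rw [pow_succ, Module.End.mul_apply, hc, map_smul, ih, smul_smul, ← pow_succ']
    have hbw2 : b w = (∑ i ∈ Finset.range p, c ^ i) • w := by
      rw [hbdef, LinearMap.sum_apply, Finset.sum_smul]
      exact Finset.sum_congr rfl fun i _ => hpow i
    have hS : (∑ i ∈ Finset.range p, c ^ i) = 0 := by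
      rcases smul_eq_zero.mp (hbw2 ▸ hbw) with h | h
      · exact h
      · exact absurd h hw
    by_cases hc1 : c = 1
    · subst hc1
      simp only [one_pow, Finset.sum_const, Finset.card_range, nsmul_eq_mul, mul_one] at hS
      exact absurd (Nat.cast_eq_zero.mp hS) hp.pos.ne'
    · rw [geom_sum_eq hc1] at hS
      have hc1' : c - 1 ≠ 0 := sub_ne_zero.mpr hc1
      have hcp : c ^ p = 1 := by
        rcases div_eq_zero_iff.mp hS with h | h
        · linarith [sub_eq_zero.mp h]
        · exact absurd h hc1'
      have habs : |c| = 1 := by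
        by_contra hab
        rcases lt_or_gt_of_ne hab with hlt | hgt
        · have h4 : |c ^ p| < 1 := by
            rw [abs_pow]
            exact pow_lt_one₀ (abs_nonneg c) hlt hp.ne_zero
          rw [hcp] at h4; simp at h4
        · have h4 : (1:ℚ) < |c ^ p| := by
            rw [abs_pow]
            exact one_lt_pow₀ hgt hp.ne_zero
          rw [hcp] at h4; simp at h4
      rcases abs_eq (by norm_num : (0:ℚ) ≤ 1) |>.mp habs with h | h
      · exact hc1 h
      · rw [h, hpodd.neg_one_pow] at hcp
        norm_num at hcp
  have hcomm : b * f = f * b := by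
    rw [hbdef, Finset.sum_mul, Finset.mul_sum]
    exact Finset.sum_congr rfl fun i _ => by rw [← pow_succ, ← pow_succ']
  have hb0 : b = 0 := end_eq_zero_aux hdim hcomm hw hbw heig
  have hspan := span_pair_eq_top hdim (indep_of_no_eig hw heig)
  obtain ⟨s, t, hst⟩ := Submodule.mem_span_pair.mp
    (hspan ▸ Submodule.mem_top : f (f w) ∈ Submodule.span ℚ ({w, f w} : Set V))
  have hr : f * f - t • f - s • (1 : Module.End ℚ V) = 0 := by
    apply end_eq_zero_aux hdim ?_ hw ?_ heig
    · simp only [sub_mul, mul_sub, smul_mul_assoc, mul_smul_comm, one_mul, mul_one, mul_assoc]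
    · simp only [LinearMap.sub_apply, LinearMap.smul_apply, Module.End.mul_apply,
        Module.End.one_apply, ← hst]
      abel
  set q : ℚ[X] := X ^ 2 - (C t * X + C s) with hqdef
  have hqm : q.Monic := monic_X_pow_sub (lt_of_le_of_lt degree_linear_le (by norm_num))
  have hqdeg : q.degree = 2 := by
    rw [hqdef, degree_sub_eq_left_of_degree_lt]
    · norm_num [degree_X_pow]
    · rw [degree_X_pow]
      exact lt_of_le_of_lt degree_linear_le (by norm_num)
  have haq : aeval f q = 0 := by
    rw [hqdef]
    simp only [map_sub, map_add, map_mul, map_pow, aeval_X, aeval_C,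
      Algebra.algebraMap_eq_smul_one]
    rw [← hr, smul_mul_assoc, one_mul, pow_two]
    abel
  have haΦ : aeval f (cyclotomic p ℚ) = 0 := by
    rw [cyclotomic_prime ℚ p, map_sum]
    simp only [map_pow, aeval_X]
    rw [← hbdef, hb0]
  have harem : aeval f ((cyclotomic p ℚ) %ₘ q) = 0 := by
    have h5 := congrArg (aeval f) (modByMonic_add_div (cyclotomic p ℚ) q)
    rw [map_add, map_mul, haq, zero_mul, add_zero, haΦ] at h5
    exact h5
  have hdeg1 : ((cyclotomic p ℚ) %ₘ q).degree ≤ 1 := by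
    have h2 := degree_modByMonic_lt (cyclotomic p ℚ) hqm
    rw [hqdeg] at h2
    by_cases hr0 : (cyclotomic p ℚ) %ₘ q = 0
    · rw [hr0]; simp
    · have h3 : ((cyclotomic p ℚ) %ₘ q).natDegree < 2 := (natDegree_lt_iff_degree_lt hr0).mpr h2
      exact le_trans degree_le_natDegree (by exact_mod_cast (by omega : ((cyclotomic p ℚ %ₘ q).natDegree) ≤ 1))
  have hrem0 : (cyclotomic p ℚ) %ₘ q = 0 := by
    have hxc := eq_X_add_C_of_degree_le_one hdeg1
    set r1 := ((cyclotomic p ℚ) %ₘ q).coeff 1 with hr1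
    set r0 := ((cyclotomic p ℚ) %ₘ q).coeff 0 with hr0
    have h6 : r1 • f + r0 • (1 : Module.End ℚ V) = 0 := by
      rw [hxc] at harem
      simp only [map_add, map_mul, aeval_X, aeval_C] at harem
      rw [Algebra.algebraMap_eq_smul_one, Algebra.algebraMap_eq_smul_one,
        smul_mul_assoc, one_mul] at harem
      exact harem
    have h7 : r0 • w + r1 • (f w) = 0 := by
      have := DFunLike.congr_fun h6 w
      simp only [LinearMap.add_apply, LinearMap.smul_apply, Module.End.one_apply,
        LinearMap.zero_apply] at this
      rw [add_comm] at this
      exact this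
    obtain ⟨h8, h9⟩ := indep_of_no_eig hw heig r0 r1 h7
    rw [hxc, h8, h9]
    simp
  have hdvd : q ∣ cyclotomic p ℚ := by
    refine ⟨(cyclotomic p ℚ) /ₘ q, ?_⟩
    have h5 := modByMonic_add_div (cyclotomic p ℚ) q
    rw [hrem0, zero_add] at h5
    exact h5.symm
  have hirr := cyclotomic.irreducible_rat hp.pos
  obtain ⟨k, hk⟩ := hdvd
  rcases hirr.isUnit_or_isUnit hk with hu | hu
  · exact absurd (isUnit_iff_degree_eq_zero.mp hu) (by rw [hqdeg]; norm_num)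
  have hdegk : k.degree = 0 := isUnit_iff_degree_eq_zero.mp hu
  have hdegΦ : (cyclotomic p ℚ).degree = ((p - 1 : ℕ) : WithBot ℕ) := by
    rw [degree_cyclotomic, Nat.totient_prime hp]
  have hp1 : p - 1 = 2 := by
    have h10 := congrArg degree hk
    rw [hdegΦ, degree_mul, hqdeg, hdegk, add_zero] at h10
    exact_mod_cast h10
  have hp3 : p = 3 := by have := hp.two_le; omega
  subst hp3
  have hkC : k = C (k.coeff 0) := eq_C_of_degree_le_zero (le_of_eq hdegk)
  have hlead : k.coeff 0 = 1 := by
    have h11 := congrArg leadingCoeff hk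
    rw [(cyclotomic.monic 3 ℚ).leadingCoeff, leadingCoeff_mul, hqm.leadingCoeff, one_mul,
      hkC, leadingCoeff_C] at h11
    exact h11.symm
  have hq3 : q = cyclotomic 3 ℚ := by
    rw [hk, hkC, hlead, map_one, mul_one]
  have h3 : cyclotomic 3 ℚ = X ^ 2 + X + 1 := by
    rw [cyclotomic_prime ℚ 3]
    rw [Finset.sum_range_succ, Finset.sum_range_succ, Finset.sum_range_one]
    ring
  have hts : t = -1 ∧ s = -1 := by
    have hq4 := hq3.trans h3
    have hcoeff1 := congrArg (fun P : ℚ[X] => P.coeff 1) hq4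
    have hcoeff0 := congrArg (fun P : ℚ[X] => P.coeff 0) hq4
    simp only [hqdef, coeff_sub, coeff_add, coeff_X_pow, coeff_C_mul, coeff_X, coeff_C,
      coeff_one, coeff_X_zero, coeff_X_one] at hcoeff1 hcoeff0
    norm_num at hcoeff1 hcoeff0
    exact ⟨by linarith, by linarith⟩
  refine ⟨rfl, ?_⟩
  have h12 := hr
  rw [hts.1, hts.2] at h12
  rw [neg_smul, neg_smul, one_smul, one_smul, sub_neg_eq_add, sub_neg_eq_add] at h12
  exact h12

end Helpers2



section Helpers3

variable {V : Type*} [AddCommGroup V] [Module ℚ V]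

private lemma eigvec_span (hdim : Module.finrank ℚ V = 2) {f : Module.End ℚ V} {c : ℚ}
    {v y : V} (hv : v ≠ 0) (hfv : f v = c • v) (hy : f y ≠ c • y) :
    ∀ x : V, f x = c • x → ∃ a : ℚ, x = a • v := by
  haveI : FiniteDimensional ℚ V := Module.finite_of_finrank_eq_succ hdim
  set K := LinearMap.ker (f - c • 1) with hK
  have hmem : ∀ x : V, x ∈ K ↔ f x = c • x := by
    intro x
    rw [hK, LinearMap.mem_ker, LinearMap.sub_apply, LinearMap.smul_apply, Module.End.one_apply,
      sub_eq_zero]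
  have hle : Submodule.span ℚ ({v} : Set V) ≤ K := by
    rw [Submodule.span_singleton_le_iff_mem, hmem]; exact hfv
  have hne : K ≠ ⊤ := fun h => hy ((hmem y).mp (h ▸ Submodule.mem_top))
  have hlt : Module.finrank ℚ K < 2 := hdim ▸ Submodule.finrank_lt hne
  have hge : 1 ≤ Module.finrank ℚ K := by
    have h1 := Submodule.finrank_mono hle
    rwa [finrank_span_singleton hv] at h1
  have heq := Submodule.eq_of_le_of_finrank_eq hle
    (by rw [finrank_span_singleton hv]; omega)
  intro x hx
  obtain ⟨a, ha⟩ := Submodule.mem_span_singleton.mp (heq ▸ (hmem x).mpr hx)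
  exact ⟨a, ha.symm⟩

private lemma invol_neg_one_mem (hdim : Module.finrank ℚ V = 2)
    (G : Subgroup ((V →ₗ[ℚ] V)ˣ))
    (hfix : ∀ v : V, (∀ g ∈ G, (g : V →ₗ[ℚ] V) v = v) → v = 0)
    (hall : ∀ g ∈ G, g * g = 1) : (-1 : (V →ₗ[ℚ] V)ˣ) ∈ G := by
  haveI : FiniteDimensional ℚ V := Module.finite_of_finrank_eq_succ hdim
  haveI : Nontrivial V := Module.nontrivial_of_finrank_eq_succ hdim
  obtain ⟨g, hgG, hg1⟩ : ∃ g ∈ G, g ≠ 1 := by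
    by_contra h
    push_neg at h
    obtain ⟨v0, hv0⟩ := exists_ne (0 : V)
    apply hv0
    apply hfix
    intro g' hg'
    rw [h g' hg']
    simp
  set f : V →ₗ[ℚ] V := (g : V →ₗ[ℚ] V) with hfdef
  have hf2 : f * f = 1 := by
    have h1 := hall g hgG
    calc f * f = ((g * g : (V →ₗ[ℚ] V)ˣ) : V →ₗ[ℚ] V) := by rw [Units.val_mul]
    _ = 1 := by rw [h1, Units.val_one]
  have hf1 : f ≠ 1 := fun h => hg1 (Units.ext (h.trans Units.val_one.symm))
  have hfact1 : (f + 1) * (f - 1) = 0 := by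
    have h1 : (f + 1) * (f - 1) = f * f - 1 := by noncomm_ring
    rw [h1, hf2, sub_self]
  have hfact2 : (f - 1) * (f + 1) = 0 := by
    have h1 : (f - 1) * (f + 1) = f * f - 1 := by noncomm_ring
    rw [h1, hf2, sub_self]
  obtain ⟨z, hz⟩ : ∃ z : V, (f - 1 : Module.End ℚ V) z ≠ 0 := by
    by_contra h
    push_neg at h
    apply hf1; ext u; have := h u
    rwa [LinearMap.sub_apply, sub_eq_zero, Module.End.one_apply] at this
  set w : V := (f - 1) z with hwdef
  have hw : w ≠ 0 := hz
  have hfw : f w = -w := by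
    have h1 : (f + 1) w = 0 := by
      rw [hwdef, ← Module.End.mul_apply, hfact1, LinearMap.zero_apply]
    rw [LinearMap.add_apply, Module.End.one_apply] at h1
    exact eq_neg_of_add_eq_zero_left h1
  by_cases hneg : ∀ z' : V, (f + 1 : Module.End ℚ V) z' = 0
  · have hfn : f = -1 := by
      ext u
      have h1 := hneg u
      rw [LinearMap.add_apply, Module.End.one_apply] at h1
      rw [LinearMap.neg_apply, Module.End.one_apply]
      exact eq_neg_of_add_eq_zero_left h1
    have hgneg : g = -1 := Units.ext (by rw [Units.val_neg, Units.val_one]; exact hfn)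
    rwa [← hgneg]
  push_neg at hneg
  obtain ⟨z', hz'⟩ := hneg
  set v : V := (f + 1) z' with hvdef
  have hv : v ≠ 0 := hz'
  have hfv : f v = v := by
    have h1 : (f - 1) v = 0 := by
      rw [hvdef, ← Module.End.mul_apply, hfact2, LinearMap.zero_apply]
    rwa [LinearMap.sub_apply, Module.End.one_apply, sub_eq_zero] at h1
  have hind : ∀ s t : ℚ, s • v + t • w = 0 → s = 0 ∧ t = 0 := by
    intro s t hst
    have h2 : s • v - t • w = 0 := by
      have h3 := congrArg f hst
      rw [map_add, map_smul, map_smul, hfv, hfw, map_zero, smul_neg, ← sub_eq_add_neg] at h3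
      exact h3
    have h3 : (2 * s) • v = 0 := by
      have h4 : (2 * s) • v = (s • v + t • w) + (s • v - t • w) := by module
      rw [h4, hst, h2, add_zero]
    have hs : s = 0 := by
      rcases smul_eq_zero.mp h3 with h | h
      · linarith
      · exact absurd h hv
    refine ⟨hs, ?_⟩
    rw [hs, zero_smul, zero_add] at hst
    rcases smul_eq_zero.mp hst with h | h
    · exact h
    · exact absurd h hw
  have hspan := span_pair_eq_top hdim hind
  have hKv : ∀ x : V, f x = (1:ℚ) • x → ∃ a : ℚ, x = a • v := by
    apply eigvec_span hdim hv (by rw [one_smul]; exact hfv) (y := w)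
    rw [one_smul, hfw]
    intro h
    apply hw
    have h6 : w + w = 0 := by nth_rewrite 1 [← h]; exact neg_add_cancel w
    have h4 : (2 : ℚ) • w = 0 := by rw [two_smul]; exact h6
    rcases smul_eq_zero.mp h4 with h7 | h7
    · norm_num at h7
    · exact h7
  have hKw : ∀ x : V, f x = (-1:ℚ) • x → ∃ a : ℚ, x = a • w := by
    apply eigvec_span hdim hw (by rw [neg_smul, one_smul]; exact hfw) (y := v)
    rw [neg_smul, one_smul, hfv]
    intro h
    apply hv
    have h6 : v + v = 0 := by nth_rewrite 2 [h]; exact add_neg_cancel v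
    have h4 : (2 : ℚ) • v = 0 := by rw [two_smul]; exact h6
    rcases smul_eq_zero.mp h4 with h7 | h7
    · norm_num at h7
    · exact h7
  have inv_self : ∀ x ∈ G, x⁻¹ = x := fun x hx => inv_eq_of_mul_eq_one_right (hall x hx)
  have habel : ∀ a ∈ G, ∀ b ∈ G, a * b = b * a := by
    intro a ha b hb
    have h1 : (b * a)⁻¹ = a * b := by rw [mul_inv_rev, inv_self a ha, inv_self b hb]
    rw [← h1, inv_self (b * a) (mul_mem hb ha)]
  have hact : ∀ h ∈ G, ∀ (x : V) (cx : ℚ), x ≠ 0 → f x = cx • x →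
      (∀ y : V, f y = cx • y → ∃ a : ℚ, y = a • x) →
      ((h : V →ₗ[ℚ] V) x = x ∨ (h : V →ₗ[ℚ] V) x = -x) := by
    intro h hh x cx hx hfx hspanx
    set e : V →ₗ[ℚ] V := (h : V →ₗ[ℚ] V) with hedef
    have hcomm : f * e = e * f := by
      have h1 := habel g hgG h hh
      calc f * e = ((g * h : (V →ₗ[ℚ] V)ˣ) : V →ₗ[ℚ] V) := (Units.val_mul g h).symm
      _ = ((h * g : (V →ₗ[ℚ] V)ˣ) : V →ₗ[ℚ] V) := by rw [h1]
      _ = e * f := Units.val_mul h g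
    have hex : f (e x) = cx • (e x) := by
      rw [← Module.End.mul_apply, hcomm, Module.End.mul_apply, hfx, map_smul]
    obtain ⟨a, ha⟩ := hspanx (e x) hex
    have hee : e (e x) = x := by
      have h1 := hall h hh
      calc e (e x) = ((h * h : (V →ₗ[ℚ] V)ˣ) : V →ₗ[ℚ] V) x := by
            rw [Units.val_mul, Module.End.mul_apply]
      _ = x := by rw [h1, Units.val_one, Module.End.one_apply]
    have ha2 : (a * a) • x = x := by
      calc (a * a) • x = a • (a • x) := by rw [mul_smul]
      _ = a • (e x) := by rw [← ha]
      _ = e (a • x) := (map_smul e a x).symm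
      _ = e (e x) := by rw [← ha]
      _ = x := hee
    have h2 : (a * a - 1) • x = 0 := by rw [sub_smul, ha2, one_smul, sub_self]
    rcases smul_eq_zero.mp h2 with h3 | h3
    · rcases mul_self_eq_one_iff.mp (by linarith : a * a = 1) with h4 | h4
      · left; rw [ha, h4, one_smul]
      · right; rw [ha, h4, neg_smul, one_smul]
    · exact absurd h3 hx
  have hminus : ∀ (e' : V →ₗ[ℚ] V), e' v = -v → e' w = -w → e' = -1 := by
    intro e' h1 h2
    ext u
    have hu : u ∈ Submodule.span ℚ ({v, w} : Set V) := hspan ▸ Submodule.mem_top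
    obtain ⟨s, t, hst⟩ := Submodule.mem_span_pair.mp hu
    rw [← hst]
    rw [map_add, map_smul, map_smul, h1, h2, LinearMap.neg_apply, Module.End.one_apply]
    module
  obtain ⟨h, hhG, hhv⟩ : ∃ h ∈ G, (h : V →ₗ[ℚ] V) v = -v := by
    by_contra hcon
    push_neg at hcon
    apply hv
    apply hfix
    intro h' hh'
    rcases hact h' hh' v 1 hv (by rw [one_smul]; exact hfv) hKv with h1 | h1
    · exact h1
    · exact absurd h1 (hcon h' hh')
  rcases hact h hhG w (-1) hw (by rw [neg_smul, one_smul]; exact hfw) hKw with hhw | hhw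
  · -- h w = w : use g * h
    have hk : ((g * h : (V →ₗ[ℚ] V)ˣ) : V →ₗ[ℚ] V) = -1 := by
      apply hminus
      · rw [Units.val_mul, Module.End.mul_apply, hhv, map_neg, hfv]
      · rw [Units.val_mul, Module.End.mul_apply, hhw, hfw]
    have : g * h = -1 := Units.ext (by rw [Units.val_neg, Units.val_one]; exact hk)
    rw [← this]
    exact mul_mem hgG hhG
  · have hk : ((h : (V →ₗ[ℚ] V)ˣ) : V →ₗ[ℚ] V) = -1 := hminus _ hhv hhw
    have : h = -1 := Units.ext (by rw [Units.val_neg, Units.val_one]; exact hk)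
    rw [← this]
    exact hhG

end Helpers3

private lemma neg_self_zero {V : Type*} [AddCommGroup V] [Module ℚ V] {v : V} (h : -v = v) : v = 0 := by
  have h6 : v + v = 0 := by nth_rewrite 1 [← h]; exact neg_add_cancel v
  have h4 : (2 : ℚ) • v = 0 := by rw [two_smul]; exact h6
  rcases smul_eq_zero.mp h4 with h7 | h7
  · norm_num at h7
  · exact h7

/-- Case N = 2 of Lemma 3.1: if `V` is a 2-dimensional `ℚ`-vector space and `G` is a
finite subgroup of `GL(V)` with `V^G = 0`, then there is a subgroup `G₀ ≤ G` of order `2`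
or `3` with `V^{G₀} = 0`. -/
theorem stmt_1 {V : Type*} [AddCommGroup V] [Module ℚ V]
    (hdim : Module.finrank ℚ V = 2)
    (G : Subgroup ((V →ₗ[ℚ] V)ˣ)) (hfin : (G : Set ((V →ₗ[ℚ] V)ˣ)).Finite)
    (hfix : ∀ v : V, (∀ g ∈ G, (g : V →ₗ[ℚ] V) v = v) → v = 0) :
    ∃ G₀ : Subgroup ((V →ₗ[ℚ] V)ˣ), G₀ ≤ G ∧ (Nat.card G₀ = 2 ∨ Nat.card G₀ = 3) ∧
      ∀ v : V, (∀ g ∈ G₀, (g : V →ₗ[ℚ] V) v = v) → v = 0 := by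
  haveI : FiniteDimensional ℚ V := Module.finite_of_finrank_eq_succ hdim
  haveI : Nontrivial V := Module.nontrivial_of_finrank_eq_succ hdim
  haveI : Finite ↥G := hfin.to_subtype
  suffices hcases : ((-1 : (V →ₗ[ℚ] V)ˣ) ∈ G) ∨
      (∃ h ∈ G, h ≠ 1 ∧
        ((h : V →ₗ[ℚ] V)) * ((h : V →ₗ[ℚ] V)) + (h : V →ₗ[ℚ] V) + 1 = 0) by
    rcases hcases with hneg | ⟨h, hhG, hne1, hrel⟩
    · refine ⟨Subgroup.zpowers (-1), Subgroup.zpowers_le.mpr hneg, Or.inl ?_, ?_⟩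
      · rw [Nat.card_zpowers]
        apply orderOf_eq_prime
        · exact neg_one_sq
        · intro h1
          obtain ⟨v0, hv0⟩ := exists_ne (0 : V)
          apply hv0
          have h2 : ((-1 : (V →ₗ[ℚ] V)ˣ) : V →ₗ[ℚ] V) v0 = v0 := by rw [h1]; simp
          rw [Units.val_neg, Units.val_one, LinearMap.neg_apply, Module.End.one_apply] at h2
          exact neg_self_zero h2
      · intro v hv
        have h2 := hv (-1) (Subgroup.mem_zpowers _)
        rw [Units.val_neg, Units.val_one, LinearMap.neg_apply, Module.End.one_apply] at h2
        exact neg_self_zero h2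
    · set f : V →ₗ[ℚ] V := (h : V →ₗ[ℚ] V) with hfdef
      have hf3 : f ^ 3 = 1 := by
        have h1 : f ^ 3 - 1 = (f - 1) * (f * f + f + 1) := by noncomm_ring
        rw [hrel, mul_zero, sub_eq_zero] at h1
        exact h1
      have h3 : h ^ 3 = 1 := Units.ext (by
        rw [Units.val_pow_eq_pow_val, Units.val_one]; exact hf3)
      have hord : orderOf h = 3 := orderOf_eq_prime h3 hne1
      refine ⟨Subgroup.zpowers h, Subgroup.zpowers_le.mpr hhG, Or.inr ?_, ?_⟩
      · rw [Nat.card_zpowers, hord]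
      · intro v hv
        have hfv : f v = v := hv h (Subgroup.mem_zpowers h)
        have h1 := DFunLike.congr_fun hrel v
        simp only [LinearMap.add_apply, Module.End.mul_apply, Module.End.one_apply,
          LinearMap.zero_apply, hfv] at h1
        have h3v : (3 : ℚ) • v = v + v + v := by module
        have h4 : (3 : ℚ) • v = 0 := by rw [h3v, h1]
        rcases smul_eq_zero.mp h4 with h7 | h7
        · norm_num at h7
        · exact h7
  by_cases hall : ∀ g ∈ G, g * g = 1
  · exact Or.inl (invol_neg_one_mem hdim G hfix hall)
  · push_neg at hall
    obtain ⟨g, hgG, hg2⟩ := hall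
    have horder : orderOf g = orderOf (⟨g, hgG⟩ : G) :=
      orderOf_injective G.subtype (Subgroup.subtype_injective G) ⟨g, hgG⟩
    have hpos : 0 < orderOf g := by rw [horder]; exact orderOf_pos _
    set n := orderOf g with hn
    have hgn : g ^ n = 1 := pow_orderOf_eq_one g
    have hn1 : n ≠ 1 := by
      intro h
      apply hg2
      have hg1 : g = 1 := orderOf_eq_one_iff.mp (by rw [← hn]; exact h)
      rw [hg1, one_mul]
    have hn2 : n ≠ 2 := by
      intro h
      apply hg2
      rw [← pow_two]
      rw [h] at hgn
      exact hgn
    have hn3 : 3 ≤ n := by omega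
    by_cases hodd : ∃ p, p.Prime ∧ p ≠ 2 ∧ p ∣ n
    · obtain ⟨p, hp, hp2, hpn⟩ := hodd
      set h := g ^ (n / p) with hh
      have hhG : h ∈ G := pow_mem hgG _
      have hnp0 : n / p ≠ 0 := (Nat.div_pos (Nat.le_of_dvd (by omega) hpn) hp.pos).ne'
      have hordh : orderOf h = p := by
        rw [hh, orderOf_pow' g hnp0, ← hn, Nat.gcd_eq_right (Nat.div_dvd_of_dvd hpn),
          Nat.div_div_self hpn (by omega)]
      have hfp : ((h : V →ₗ[ℚ] V)) ^ p = 1 := by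
        rw [← Units.val_pow_eq_pow_val, ← hordh, pow_orderOf_eq_one, Units.val_one]
      have hf1 : ((h : V →ₗ[ℚ] V)) ≠ 1 := by
        intro hc
        have h1 : h = 1 := Units.ext (hc.trans Units.val_one.symm)
        rw [h1, orderOf_one] at hordh
        exact hp.one_lt.ne' hordh.symm
      obtain ⟨hp3, hrel⟩ := odd_prime_order hdim hp hp2 hfp hf1
      exact Or.inr ⟨h, hhG, fun hc => hf1 (by rw [hc, Units.val_one]), hrel⟩
    · push_neg at hodd
      have huniq : ∀ {q : ℕ}, q.Prime → q ∣ n → q = 2 := by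
        intro q hq hqn
        by_contra hq2
        exact hodd q hq hq2 hqn
      have hpow2 : n = 2 ^ n.primeFactorsList.length :=
        Nat.eq_prime_pow_of_unique_prime_dvd (by omega) huniq
      have hlen : 2 ≤ n.primeFactorsList.length := by
        by_contra hlt
        push_neg at hlt
        have h0 : n.primeFactorsList.length = 0 ∨ n.primeFactorsList.length = 1 := by omega
        rcases h0 with h0 | h0 <;> rw [h0] at hpow2 <;> simp at hpow2 <;> omega
      have h4n : (4 : ℕ) ∣ n := by
        rw [hpow2]
        have h1 : (2 : ℕ) ^ 2 ∣ 2 ^ n.primeFactorsList.length := pow_dvd_pow 2 hlen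
        simpa using h1
      set h := g ^ (n / 4) with hh
      have hhG : h ∈ G := pow_mem hgG _
      have hn40 : n / 4 ≠ 0 := (Nat.div_pos (Nat.le_of_dvd (by omega) h4n) (by norm_num)).ne'
      have hordh : orderOf h = 4 := by
        rw [hh, orderOf_pow' g hn40, ← hn, Nat.gcd_eq_right (Nat.div_dvd_of_dvd h4n),
          Nat.div_div_self h4n (by omega)]
      have hf4 : ((h : V →ₗ[ℚ] V)) ^ 4 = 1 := by
        rw [← Units.val_pow_eq_pow_val, ← hordh, pow_orderOf_eq_one, Units.val_one]
      have hf2 : ((h : V →ₗ[ℚ] V)) ^ 2 ≠ 1 := by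
        intro hc
        have h2 : h ^ 2 = 1 := Units.ext (by
          rw [Units.val_pow_eq_pow_val, hc, Units.val_one])
        have h1 := orderOf_dvd_of_pow_eq_one h2
        rw [hordh] at h1
        norm_num at h1
      have hsq := order_four hdim hf4 hf2
      have hneg : h ^ 2 = -1 := Units.ext (by
        rw [Units.val_pow_eq_pow_val, hsq, Units.val_neg, Units.val_one])
      exact Or.inl (hneg ▸ pow_mem hhG 2)
end

section
/- Let V be a vector space over ℚ with dim V = 3 and let τ ∈ GL(V) be an element of finite order such that τ has no nonzero fixed vector (i.e. τ·v = v implies v = 0). Then the order of τ is 2, 4, or 6. -/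
open Polynomial

private lemma aux_dvd_twelve {d : ℕ} (h : d.totient = 2) : d ∣ 12 := by
  have key : ∀ p : ℕ, p.Prime → p ∣ d → p ≤ 3 := by
    intro p hp hpd
    have h1 := Nat.totient_dvd_of_dvd hpd
    rw [Nat.totient_prime hp, h] at h1
    have h2 := Nat.le_of_dvd (by norm_num) h1
    have := hp.two_le
    omega
  have h8 : ¬ (8 ∣ d) := by
    intro h8
    have h1 := Nat.totient_dvd_of_dvd h8
    rw [h, show Nat.totient 8 = 4 from by decide] at h1
    omega
  have h9 : ¬ (9 ∣ d) := by
    intro h9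
    have h1 := Nat.totient_dvd_of_dvd h9
    rw [h, show Nat.totient 9 = 6 from by decide] at h1
    omega
  rw [Nat.dvd_iff_prime_pow_dvd_dvd]
  intro p k hp hpk
  rcases Nat.eq_zero_or_pos k with rfl | hk
  · simp
  have hpd : p ∣ d := dvd_trans (dvd_pow_self p hk.ne') hpk
  have hp3 : p ≤ 3 := key p hp hpd
  have hp2 := hp.two_le
  interval_cases p
  · have hk2 : k ≤ 2 := by
      by_contra hk2
      exact h8 (dvd_trans (by exact pow_dvd_pow 2 (by omega : 3 ≤ k)) hpk)
    interval_cases k <;> norm_num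
  · have hk1 : k ≤ 1 := by
      by_contra hk1
      exact h9 (dvd_trans (by exact pow_dvd_pow 3 (by omega : 2 ≤ k)) hpk)
    interval_cases k <;> norm_num

private lemma aux_exists_eigen {V : Type*} [AddCommGroup V] [Module ℚ V] [FiniteDimensional ℚ V]
    (f : V →ₗ[ℚ] V) {a : ℚ} (h : (LinearMap.charpoly f).IsRoot a) :
    ∃ v : V, v ≠ 0 ∧ f v = a • v := by
  classical
  let b := Module.finBasis ℚ V
  let M := LinearMap.toMatrix b b f
  have hcp : M.charpoly = LinearMap.charpoly f := LinearMap.charpoly_toMatrix f b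
  have h1 : (M.charpoly).eval a = 0 := by rw [hcp]; exact h
  rw [Matrix.charpoly, _root_.eval_det, Matrix.matPolyEquiv_charmatrix,
    eval_sub, eval_X, eval_C] at h1
  have hnu : ¬ IsUnit (a • (1 : V →ₗ[ℚ] V) - f) := by
    intro hu
    have hu2 : IsUnit (LinearMap.toMatrix b b (a • (1 : V →ₗ[ℚ] V) - f)) := by
      have : IsUnit (LinearMap.toMatrixAlgEquiv b (a • (1 : V →ₗ[ℚ] V) - f)) :=
        hu.map (LinearMap.toMatrixAlgEquiv b)
      simpa [LinearMap.toMatrixAlgEquiv] using this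
    rw [Matrix.isUnit_iff_isUnit_det] at hu2
    have heq : LinearMap.toMatrix b b (a • (1 : V →ₗ[ℚ] V) - f) = Matrix.scalar _ a - M := by
      rw [map_sub, map_smul]
      congr 1
      ext i j
      simp [Matrix.scalar_apply, LinearMap.toMatrix_one, Matrix.smul_apply, Matrix.one_apply,
        Matrix.diagonal]
    rw [heq, h1] at hu2
    exact (by simpa using hu2 : False)
  rw [LinearMap.isUnit_iff_ker_eq_bot] at hnu
  obtain ⟨v, hv, hv0⟩ := Submodule.exists_mem_ne_zero_of_ne_bot hnu
  refine ⟨v, hv0, ?_⟩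
  have := LinearMap.mem_ker.mp hv
  simp only [LinearMap.sub_apply, LinearMap.smul_apply, Module.End.one_apply] at this
  linear_combination (norm := module) -this

/-- From the proof of Lemma 3.1 (case N = 3): an element of finite order of `GL(V)`,
`dim_ℚ V = 3`, with no nonzero fixed vector has order `2`, `4`, or `6`. -/
theorem stmt_4 {V : Type*} [AddCommGroup V] [Module ℚ V]
    (hdim : Module.finrank ℚ V = 3)
    (τ : (V →ₗ[ℚ] V)ˣ) (hord : IsOfFinOrder τ)
    (hfix : ∀ v : V, (τ : V →ₗ[ℚ] V) v = v → v = 0) :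
    orderOf τ = 2 ∨ orderOf τ = 4 ∨ orderOf τ = 6 := by
  classical
  have hFD : FiniteDimensional ℚ V := FiniteDimensional.of_finrank_pos (by omega)
  have hnontriv : Nontrivial V := Module.nontrivial_of_finrank_pos (R := ℚ) (by omega)
  set f : V →ₗ[ℚ] V := (τ : V →ₗ[ℚ] V) with hfdef
  set n := orderOf τ with hndef
  have hnpos : 0 < n := hord.orderOf_pos
  have hfn : f ^ n = 1 := by
    rw [hfdef, ← Units.val_pow_eq_pow_val, pow_orderOf_eq_one τ, Units.val_one]
  have hdvd_of_pow : ∀ m : ℕ, f ^ m = 1 → n ∣ m := by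
    intro m hm
    refine orderOf_dvd_of_pow_eq_one (Units.ext ?_)
    rw [Units.val_pow_eq_pow_val, Units.val_one]
    exact hm
  set p := minpoly ℚ f with hpdef
  have hpmonic : p.Monic := minpoly.monic (LinearMap.isIntegral f)
  have hpne : p ≠ 0 := hpmonic.ne_zero
  have hpdvd : p ∣ ∏ d ∈ n.divisors, cyclotomic d ℚ := by
    rw [prod_cyclotomic_eq_X_pow_sub_one hnpos]
    exact minpoly.dvd _ _ (by simp [hfn, sub_eq_zero])
  set S : Finset ℕ := n.divisors.filter (fun d => cyclotomic d ℚ ∣ p) with hSdef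
  have hmemS : ∀ d ∈ S, d ∈ n.divisors ∧ cyclotomic d ℚ ∣ p := by
    intro d hd; exact Finset.mem_filter.mp hd
  have hprod_dvd_p : (∏ d ∈ S, cyclotomic d ℚ) ∣ p := by
    apply Finset.prod_dvd_of_coprime
    · intro a ha b hb hab
      exact cyclotomic.isCoprime_rat hab
    · intro d hd; exact (hmemS d hd).2
  have hA : p ∣ ∏ d ∈ S, cyclotomic d ℚ := by
    have hsplit : (∏ d ∈ n.divisors, cyclotomic d ℚ)
        = (∏ d ∈ S, cyclotomic d ℚ) *
          ∏ d ∈ n.divisors.filter (fun d => ¬ cyclotomic d ℚ ∣ p), cyclotomic d ℚ :=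
      (Finset.prod_filter_mul_prod_filter_not _ _ _).symm
    have hcop : IsCoprime p
        (∏ d ∈ n.divisors.filter (fun d => ¬ cyclotomic d ℚ ∣ p), cyclotomic d ℚ) := by
      apply IsCoprime.prod_right
      intro d hd
      obtain ⟨hd1, hd2⟩ := Finset.mem_filter.mp hd
      exact (((cyclotomic.irreducible_rat
        (Nat.pos_of_mem_divisors hd1)).coprime_iff_not_dvd).mpr hd2).symm
    exact hcop.dvd_of_dvd_mul_right (hsplit ▸ hpdvd)
  have hchar3 : (LinearMap.charpoly f).natDegree = 3 := by
    rw [LinearMap.charpoly_natDegree, hdim]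
  have hdegp : p.natDegree ≤ 3 := by
    rw [← hchar3]
    exact Polynomial.natDegree_le_of_dvd (LinearMap.minpoly_dvd_charpoly f)
      (LinearMap.charpoly_monic f).ne_zero
  have hsum : ∑ d ∈ S, d.totient ≤ 3 := by
    have h1 : (∏ d ∈ S, cyclotomic d ℚ).natDegree ≤ 3 :=
      le_trans (Polynomial.natDegree_le_of_dvd hprod_dvd_p hpne) hdegp
    rwa [Polynomial.natDegree_prod _ _ (fun d _ => cyclotomic_ne_zero d ℚ),
      Finset.sum_congr rfl (fun d _ => natDegree_cyclotomic d ℚ)] at h1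
  have h1S : (1 : ℕ) ∉ S := by
    intro h1
    have hdvd1 : (X - C (1:ℚ)) ∣ p := by
      have h2 := (hmemS 1 h1).2
      rwa [cyclotomic_one, ← C_1] at h2
    have hroot : p.IsRoot 1 := dvd_iff_isRoot.mp hdvd1
    have hev : (Module.End.HasEigenvalue f 1) := Module.End.hasEigenvalue_of_isRoot hroot
    obtain ⟨v, hv⟩ := hev.exists_hasEigenvector
    exact hv.right (hfix v (by simpa using hv.apply_eq_smul))
  have hmem : ∀ d ∈ S, d ∈ ({2, 3, 4, 6} : Finset ℕ) := by
    intro d hd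
    obtain ⟨hd1, hd2⟩ := hmemS d hd
    have hdpos : 0 < d := Nat.pos_of_mem_divisors hd1
    have hdne1 : d ≠ 1 := fun h => h1S (h ▸ hd)
    have hφle : d.totient ≤ 3 := by
      have h2 := Polynomial.natDegree_le_of_dvd hd2 hpne
      rw [natDegree_cyclotomic] at h2
      omega
    rcases Nat.lt_or_ge d 3 with h | h
    · interval_cases d
      · exact absurd rfl hdne1
      · decide
    · have heven : Even d.totient := Nat.totient_even (by omega)
      have hφpos : 0 < d.totient := Nat.totient_pos.mpr hdpos
      have hφ2 : d.totient = 2 := by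
        rcases heven with ⟨k, hk⟩; omega
      have hd12 : d ∈ Nat.divisors 12 := Nat.mem_divisors.mpr ⟨aux_dvd_twelve hφ2, by norm_num⟩
      fin_cases hd12 <;> first | decide | omega | exact absurd hφ2 (by decide)
  have hSne : S.Nonempty := by
    rw [Finset.nonempty_iff_ne_empty]
    intro hS0
    rw [hS0, Finset.prod_empty] at hA
    have hp1 : p = 1 := hpmonic.eq_one_of_isUnit (isUnit_of_dvd_one hA)
    have h0 := minpoly.aeval ℚ f
    rw [← hpdef, hp1, map_one] at h0
    obtain ⟨v, hv⟩ := exists_ne (0 : V)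
    have hv0 : (1 : V →ₗ[ℚ] V) v = 0 := by rw [h0]; rfl
    exact hv (by simpa using hv0)
  have hgen : ∀ m : ℕ, (∀ d ∈ S, d ∣ m) → n ∣ m := by
    intro m hm
    apply hdvd_of_pow
    have hdvd : p ∣ (X ^ m - 1 : ℚ[X]) := by
      refine hA.trans (Finset.prod_dvd_of_coprime
        (fun a _ b _ hab => cyclotomic.isCoprime_rat hab) ?_)
      intro d hd
      obtain ⟨k, hk⟩ := hm d hd
      exact (cyclotomic.dvd_X_pow_sub_one d ℚ).trans
        (by simpa [hk, pow_mul] using sub_dvd_pow_sub_pow ((X:ℚ[X]) ^ d) 1 k)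
    obtain ⟨q, hq⟩ := hdvd
    have h0 : aeval f ((X:ℚ[X]) ^ m - 1) = 0 := by
      rw [hq, map_mul, show (aeval f) p = 0 from minpoly.aeval ℚ f, zero_mul]
    have h0' : f ^ m - 1 = 0 := by simpa using h0
    rw [sub_eq_zero] at h0'
    exact h0'
  have hndvd12 : n ∣ 12 := by
    apply hgen
    intro d hd
    have hd46 := hmem d hd
    fin_cases hd46 <;> norm_num
  have hn1 : n ≠ 1 := by
    intro h1
    have hf1 : f = 1 := by simpa [h1] using hfn
    obtain ⟨v, hv⟩ := exists_ne (0 : V)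
    exact hv (hfix v (by rw [hf1]; rfl))
  have hn12 : n ≠ 12 := by
    intro h12
    have h4 : 4 ∈ S := by
      by_contra h4
      have hlcm : n ∣ 6 := by
        apply hgen
        intro d hd
        have hd46 := hmem d hd
        fin_cases hd46 <;> first | exact absurd hd h4 | decide
      rw [h12] at hlcm
      exact absurd hlcm (by decide)
    have h36 : 3 ∈ S ∨ 6 ∈ S := by
      by_contra h36
      push_neg at h36
      have hlcm : n ∣ 4 := by
        apply hgen
        intro d hd
        have hd46 := hmem d hd
        fin_cases hd46 <;>
          first | exact absurd hd h36.1 | exact absurd hd h36.2 | decide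
      rw [h12] at hlcm
      exact absurd hlcm (by decide)
    rcases h36 with h3 | h6
    · have hsub : ({3, 4} : Finset ℕ) ⊆ S := by
        intro x hx; fin_cases hx <;> assumption
      have hle := Finset.sum_le_sum_of_subset (f := Nat.totient) hsub
      rw [show ∑ d ∈ ({3,4} : Finset ℕ), d.totient = 4 from by decide] at hle
      omega
    · have hsub : ({4, 6} : Finset ℕ) ⊆ S := by
        intro x hx; fin_cases hx <;> assumption
      have hle := Finset.sum_le_sum_of_subset (f := Nat.totient) hsub
      rw [show ∑ d ∈ ({4,6} : Finset ℕ), d.totient = 4 from by decide] at hle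
      omega
  have hn3 : n ≠ 3 := by
    intro h3
    have hall : ∀ d ∈ S, d = 3 := by
      intro d hd
      have hdd := (hmemS d hd).1
      rw [h3] at hdd
      fin_cases hdd
      · exact absurd hd h1S
      · rfl
    obtain ⟨d0, hd0⟩ := hSne
    have h30 : (3:ℕ) ∈ S := hall d0 hd0 ▸ hd0
    have hSeq : S = {3} := Finset.eq_singleton_iff_unique_mem.mpr ⟨h30, hall⟩
    have hc3p : cyclotomic 3 ℚ ∣ p := (hmemS 3 h30).2
    have hpc3 : p ∣ cyclotomic 3 ℚ := by
      rw [hSeq, Finset.prod_singleton] at hA; exact hA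
    have hpe : p = cyclotomic 3 ℚ :=
      eq_of_monic_of_associated hpmonic (cyclotomic.monic 3 ℚ)
        (associated_of_dvd_dvd hpc3 hc3p)
    obtain ⟨q, hq⟩ := LinearMap.minpoly_dvd_charpoly f
    rw [← hpdef] at hq
    have hqmonic : q.Monic := by
      have hcm := LinearMap.charpoly_monic f
      rw [hq] at hcm
      exact hpmonic.of_mul_monic_left hcm
    have hqdeg : q.natDegree = 1 := by
      have h3' := hchar3
      rw [hq, Polynomial.natDegree_mul hpne hqmonic.ne_zero, hpe, natDegree_cyclotomic,
        show Nat.totient 3 = 2 from by decide] at h3'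
      omega
    have hqeq : q = X + C (q.coeff 0) := hqmonic.eq_X_add_C hqdeg
    have hcroot : (LinearMap.charpoly f).IsRoot (-(q.coeff 0)) := by
      rw [hq, IsRoot, eval_mul, hqeq]
      simp
    obtain ⟨v, hv0, hva⟩ := aux_exists_eigen f hcroot
    have hev : Module.End.HasEigenvector f (-(q.coeff 0)) v :=
      ⟨Module.End.mem_eigenspace_iff.mpr hva, hv0⟩
    have h1 : p.eval (-(q.coeff 0)) • v = 0 := by
      rw [← Module.End.aeval_apply_of_hasEigenvector hev,
        show (aeval f) p = 0 from minpoly.aeval ℚ f]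
      rfl
    have h2 : p.eval (-(q.coeff 0)) = 0 := by
      rcases smul_eq_zero.mp h1 with h | h
      · exact h
      · exact absurd h hv0
    rw [hpe, cyclotomic_three] at h2
    simp only [eval_add, eval_pow, eval_X, eval_one] at h2
    nlinarith [sq_nonneg (2 * (-(q.coeff 0)) + 1)]
  clear_value n
  have hle := Nat.le_of_dvd (by norm_num) hndvd12
  interval_cases n <;> omega
end

section
/- Let V be a vector space over ℚ with dim V = 3 and let G₁ be a subgroup of GL(V) isomorphic to the Klein four group ℤ/2 × ℤ/2 such that every element of G₁ has determinant 1. Then the fixed subspace V^{G₁} is zero. -/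
open Module LinearMap

/-- An involution of a 3-dimensional `ℚ`-vector space with determinant `1` that is not the
identity has trace `-1`. -/
lemma invol_trace_aux {V : Type*} [AddCommGroup V] [Module ℚ V] [FiniteDimensional ℚ V]
    (hdim : Module.finrank ℚ V = 3) (A : V →ₗ[ℚ] V) (hA2 : A * A = 1)
    (hdetA : LinearMap.det A = 1) (hne : A ≠ 1) :
    LinearMap.trace ℚ V A = -1 := by
  classical
  set Vp := LinearMap.ker (A - 1) with hVp
  set Vm := LinearMap.ker (A + 1) with hVm
  have hA2' : ∀ x : V, A (A x) = x := by
    intro x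
    have := congrArg (fun f : V →ₗ[ℚ] V => f x) hA2
    simpa using this
  have hmemp : ∀ x : V, x ∈ Vp ↔ A x = x := by
    intro x
    simp [hVp, LinearMap.mem_ker, sub_eq_zero]
  have hmemm : ∀ x : V, x ∈ Vm ↔ A x = -x := by
    intro x
    simp [hVm, LinearMap.mem_ker, add_eq_zero_iff_eq_neg]
  have hcompl : IsCompl Vp Vm := by
    constructor
    · rw [Submodule.disjoint_def]
      intro x hxp hxm
      have h1 : A x = x := (hmemp x).mp hxp
      have h2 : A x = -x := (hmemm x).mp hxm
      have : x + x = 0 := by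
        nth_rewrite 1 [← h1]
        rw [h2]; abel
      have h2x : (2 : ℚ) • x = 0 := by rw [two_smul]; exact this
      have := smul_eq_zero.mp h2x
      simpa using this
    · rw [codisjoint_iff, Submodule.eq_top_iff']
      intro x
      rw [Submodule.mem_sup]
      refine ⟨(2:ℚ)⁻¹ • (x + A x), ?_, (2:ℚ)⁻¹ • (x - A x), ?_, ?_⟩
      · apply Submodule.smul_mem
        rw [hmemp, map_add, hA2' x, add_comm (A x) x]
      · apply Submodule.smul_mem
        rw [hmemm, map_sub, hA2' x, neg_sub]
      · rw [← smul_add]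
        have : x + A x + (x - A x) = (2:ℚ) • x := by
          rw [two_smul]; abel
        rw [this, ← smul_assoc]
        norm_num
  have hpm : finrank ℚ Vp + finrank ℚ Vm = 3 := by
    rw [Submodule.finrank_add_eq_of_isCompl hcompl, hdim]
  set p := finrank ℚ Vp with hp
  set m := finrank ℚ Vm with hm
  let bp := Module.finBasis ℚ Vp
  let bm := Module.finBasis ℚ Vm
  let e := Submodule.prodEquivOfIsCompl Vp Vm hcompl
  let b : Basis (Fin p ⊕ Fin m) ℚ V := (bp.prod bm).map e
  let ε : Fin p ⊕ Fin m → ℚ := Sum.elim (fun _ => 1) (fun _ => -1)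
  have hb : ∀ j, A (b j) = ε j • b j := by
    rintro (j | j)
    · have hbj : b (Sum.inl j) = (bp j : V) := by
        simp [b, e, Basis.map_apply, Basis.prod_apply,
          Submodule.coe_prodEquivOfIsCompl']
      rw [hbj]
      have : A (bp j : V) = (bp j : V) := (hmemp _).mp (bp j).2
      simp [this, ε]
    · have hbj : b (Sum.inr j) = (bm j : V) := by
        simp [b, e, Basis.map_apply, Basis.prod_apply,
          Submodule.coe_prodEquivOfIsCompl']
      rw [hbj]
      have : A (bm j : V) = -(bm j : V) := (hmemm _).mp (bm j).2
      simp [this, ε]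
  have hM : LinearMap.toMatrix b b A = Matrix.diagonal ε := by
    ext i j
    rw [LinearMap.toMatrix_apply, hb, map_smul, b.repr_self]
    rcases eq_or_ne i j with h | h
    · subst h
      simp [Matrix.diagonal_apply_eq]
    · simp [Matrix.diagonal_apply_ne _ h, Finsupp.single_apply, (Ne.symm h)]
  have hdet' : LinearMap.det A = (-1 : ℚ) ^ m := by
    rw [← LinearMap.det_toMatrix b, hM, Matrix.det_diagonal,
      Fintype.prod_sum_type]
    simp [ε]
  have hmeven : Even m := by
    rw [hdetA] at hdet'
    exact (neg_one_pow_eq_one_iff_even (by norm_num)).mp hdet'.symm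
  have hm0 : m ≠ 0 := by
    intro hm0
    apply hne
    have hptop : Vp = ⊤ := by
      apply Submodule.eq_top_of_finrank_eq
      rw [← hp] at *
      omega
    ext x
    have : x ∈ Vp := hptop ▸ Submodule.mem_top
    simpa using (hmemp x).mp this
  have hm2 : m = 2 := by
    obtain ⟨k, hk⟩ := hmeven
    omega
  have hp1 : p = 1 := by omega
  have htr : LinearMap.trace ℚ V A = (p : ℚ) * 1 + (m : ℚ) * (-1) := by
    rw [LinearMap.trace_eq_matrix_trace ℚ b, hM, Matrix.trace_diagonal,
      Fintype.sum_sum_type]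
    simp [ε, mul_comm]
  rw [htr, hp1, hm2]
  norm_num

/-- From the proof of Lemma 3.1 (case N = 3): a subgroup of `GL(V)`, `dim_ℚ V = 3`,
isomorphic to the Klein four group `ℤ/2 × ℤ/2`, all of whose elements have determinant
`1`, has zero fixed subspace. -/
theorem stmt_8 {V : Type*} [AddCommGroup V] [Module ℚ V]
    (hdim : Module.finrank ℚ V = 3)
    (G₁ : Subgroup ((V →ₗ[ℚ] V)ˣ))
    (hiso : Nonempty (G₁ ≃* Multiplicative (ZMod 2 × ZMod 2)))
    (hdet : ∀ g ∈ G₁, LinearMap.det (g : V →ₗ[ℚ] V) = 1) :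
    ∀ v : V, (∀ g ∈ G₁, (g : V →ₗ[ℚ] V) v = v) → v = 0 := by
  classical
  intro v hv
  have hfin : FiniteDimensional ℚ V := Module.finite_of_finrank_pos (by omega)
  obtain ⟨φ⟩ := hiso
  -- every element of G₁ squares to 1, and G₁ is commutative
  have hK : ∀ x : Multiplicative (ZMod 2 × ZMod 2), x * x = 1 := by decide
  have hsq : ∀ g : G₁, g * g = 1 := by
    intro g
    apply φ.injective
    rw [map_mul, map_one]
    exact hK (φ g)
  have hcomm : ∀ g h : G₁, g * h = h * g := by
    intro g h
    apply φ.injective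
    rw [map_mul, map_mul, mul_comm]
  -- generators
  set a : G₁ := φ.symm (Multiplicative.ofAdd ((1 : ZMod 2), (0 : ZMod 2))) with ha
  set b : G₁ := φ.symm (Multiplicative.ofAdd ((0 : ZMod 2), (1 : ZMod 2))) with hb
  set c : G₁ := a * b with hc
  have ha1 : a ≠ 1 := by
    intro h
    apply_fun φ at h
    rw [ha, MulEquiv.apply_symm_apply, map_one] at h
    exact absurd h (by decide)
  have hb1 : b ≠ 1 := by
    intro h
    apply_fun φ at h
    rw [hb, MulEquiv.apply_symm_apply, map_one] at h
    exact absurd h (by decide)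
  have hc1 : c ≠ 1 := by
    intro h
    apply_fun φ at h
    rw [hc, map_mul, ha, hb, MulEquiv.apply_symm_apply, MulEquiv.apply_symm_apply,
      map_one] at h
    exact absurd h (by decide)
  -- pass to endomorphisms
  set A : V →ₗ[ℚ] V := ((a : (V →ₗ[ℚ] V)ˣ) : V →ₗ[ℚ] V) with hA
  set B : V →ₗ[ℚ] V := ((b : (V →ₗ[ℚ] V)ˣ) : V →ₗ[ℚ] V) with hB
  set C : V →ₗ[ℚ] V := ((c : (V →ₗ[ℚ] V)ˣ) : V →ₗ[ℚ] V) with hC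
  have keymul : ∀ g h : G₁,
      (((g * h : G₁) : (V →ₗ[ℚ] V)ˣ) : V →ₗ[ℚ] V)
        = (((g : (V →ₗ[ℚ] V)ˣ) : V →ₗ[ℚ] V)) * (((h : (V →ₗ[ℚ] V)ˣ) : V →ₗ[ℚ] V)) :=
    fun g h => rfl
  have keyone : (((1 : G₁) : (V →ₗ[ℚ] V)ˣ) : V →ₗ[ℚ] V) = 1 := rfl
  have inj : ∀ g h : G₁,
      (((g : (V →ₗ[ℚ] V)ˣ) : V →ₗ[ℚ] V)) = (((h : (V →ₗ[ℚ] V)ˣ) : V →ₗ[ℚ] V)) → g = h := by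
    intro g h hgh
    exact Subtype.ext (Units.ext hgh)
  have hAA : A * A = 1 := by rw [hA, ← keymul, hsq a, keyone]
  have hBB : B * B = 1 := by rw [hB, ← keymul, hsq b, keyone]
  have hCC : C * C = 1 := by rw [hC, ← keymul, hsq c, keyone]
  have hAB : A * B = C := by rw [hA, hB, hC, ← keymul, ← hc]
  have hBA : B * A = C := by rw [hA, hB, hC, ← keymul, ← hcomm a b, ← hc]
  have hAC : A * C = B := by
    rw [hC, hc, keymul, ← hA, ← hB, ← mul_assoc, hAA, one_mul]
  have hCA : C * A = B := by
    rw [hC, hc, keymul, ← hA, ← hB, mul_assoc, hBA, hAC]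
  have hCB : C * B = A := by
    rw [hC, hc, keymul, ← hA, ← hB, mul_assoc, hBB, mul_one]
  have hBC : B * C = A := by
    rw [hC, hc, keymul, ← hA, ← hB, ← mul_assoc, hBA]
    exact hCB
  -- traces
  have hAne : A ≠ 1 := fun h => ha1 (inj a 1 (by rw [← hA, h]; rfl))
  have hBne : B ≠ 1 := fun h => hb1 (inj b 1 (by rw [← hB, h]; rfl))
  have hCne : C ≠ 1 := fun h => hc1 (inj c 1 (by rw [← hC, h]; rfl))
  have htrA : LinearMap.trace ℚ V A = -1 :=
    invol_trace_aux hdim A hAA (hdet _ a.2) hAne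
  have htrB : LinearMap.trace ℚ V B = -1 :=
    invol_trace_aux hdim B hBB (hdet _ b.2) hBne
  have htrC : LinearMap.trace ℚ V C = -1 :=
    invol_trace_aux hdim C hCC (hdet _ c.2) hCne
  -- the averaging projector
  set S : V →ₗ[ℚ] V := 1 + A + B + C with hS
  have hSS : S * S = S + S + S + S := by
    rw [hS]
    simp only [mul_add, add_mul, one_mul, mul_one, hAA, hBB, hCC, hAB, hBA, hAC, hCA,
      hBC, hCB]
    abel
  set P : V →ₗ[ℚ] V := (4 : ℚ)⁻¹ • S with hP
  have hPP : P * P = P := by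
    rw [hP, smul_mul_assoc, mul_smul_comm, hSS]
    module
  obtain ⟨q, hq⟩ := (LinearMap.isProj_iff_isIdempotentElem P).mpr
    (by exact hPP)
  have htrP : LinearMap.trace ℚ V P = 0 := by
    rw [hP, map_smul, hS, map_add, map_add, map_add, LinearMap.trace_one, htrA, htrB,
      htrC, hdim]
    norm_num
  have hq0 : q = ⊥ := by
    have h1 := hq.trace
    rw [htrP] at h1
    have h2 : finrank ℚ q = 0 := by exact_mod_cast h1.symm
    exact Submodule.finrank_eq_zero.mp h2
  have hPv : P v = v := by
    have hAv : A v = v := hv _ a.2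
    have hBv : B v = v := hv _ b.2
    have hCv : C v = v := hv _ c.2
    rw [hP, hS, LinearMap.smul_apply, LinearMap.add_apply, LinearMap.add_apply,
      LinearMap.add_apply, Module.End.one_apply, hAv, hBv, hCv]
    module
  have hmem := hq.map_mem v
  rw [hq0, Submodule.mem_bot] at hmem
  rw [← hPv]
  exact hmem
end

section
/- Let V be a vector space over ℚ with dim V = 4 and let τ ∈ GL(V) be an element of finite order such that τ has no nonzero fixed vector (i.e. τ·v = v implies v = 0). Then the order of τ divides 8, 10, or 12. -/
open Polynomial

/-- For odd `m`, `m ≤ φ(m)^2`. -/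
private lemma aux_odd_le_totient_sq : ∀ m : ℕ, Odd m → m ≤ m.totient ^ 2 := by
  intro m
  induction m using Nat.strong_induction_on with
  | _ m ih =>
    intro hodd
    rcases eq_or_ne m 0 with rfl | h0
    · simp
    rcases eq_or_ne m 1 with rfl | h1
    · simp
    have hp : m.minFac.Prime := Nat.minFac_prime h1
    have hpd : m.minFac ∣ m := Nat.minFac_dvd m
    obtain ⟨k, hk⟩ := hpd
    set p := m.minFac with hpdef
    have hp2 : p ≠ 2 := by
      intro h
      rw [Nat.odd_iff] at hodd
      have : 2 ∣ m := h ▸ Nat.minFac_dvd m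
      omega
    have hp3 : 3 ≤ p := by
      have := hp.two_le
      omega
    have hk0 : k ≠ 0 := by rintro rfl; simp at hk; exact h0 hk
    have hklt : k < m := by
      have hk1 : 1 ≤ k := Nat.pos_of_ne_zero hk0
      calc k < 3 * k := by omega
        _ ≤ p * k := Nat.mul_le_mul_right k hp3
        _ = m := hk.symm
    have hkodd : Odd k := by
      rcases Nat.even_or_odd k with he | ho
      · exfalso
        have : Even m := hk ▸ he.mul_left p
        exact (Nat.not_even_iff_odd.mpr hodd) this
      · exact ho
    have ihk := ih k hklt hkodd
    have hφk : 1 ≤ k.totient := Nat.totient_pos.mpr (Nat.pos_of_ne_zero hk0)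
    obtain ⟨q, hq⟩ : ∃ q, p = q + 3 := ⟨p - 3, by omega⟩
    rw [hq] at hp hk
    by_cases hpk : (q + 3) ∣ k
    · rw [hk, Nat.totient_mul_of_prime_of_dvd hp hpk]
      calc (q + 3) * k ≤ (q + 3) * k.totient ^ 2 := by gcongr
        _ ≤ (q + 3) ^ 2 * k.totient ^ 2 := by gcongr; nlinarith
        _ = ((q + 3) * k.totient) ^ 2 := by ring
    · have hcop : Nat.Coprime (q + 3) k := (Nat.Prime.coprime_iff_not_dvd hp).mpr hpk
      rw [hk, Nat.totient_mul hcop, Nat.totient_prime hp]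
      have : (q + 3) - 1 = q + 2 := by omega
      rw [this]
      calc (q + 3) * k ≤ (q + 3) * k.totient ^ 2 := by gcongr
        _ ≤ (q + 2) ^ 2 * k.totient ^ 2 := Nat.mul_le_mul_right _ (by nlinarith)
        _ = ((q + 2) * k.totient) ^ 2 := by ring

/-- For all `d`, `d ≤ 2 * φ(d)^2`. -/
private lemma aux_le_two_mul_totient_sq : ∀ d : ℕ, d ≤ 2 * d.totient ^ 2 := by
  intro d
  induction d using Nat.strong_induction_on with
  | _ d ih =>
    rcases eq_or_ne d 0 with rfl | h0
    · simp
    rcases Nat.even_or_odd d with he | ho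
    · obtain ⟨m, rfl⟩ := he
      rw [← two_mul] at h0 ih ⊢
      have hm0 : m ≠ 0 := by rintro rfl; simp at h0
      have hmlt : m < 2 * m := by omega
      have hφm : 1 ≤ m.totient := Nat.totient_pos.mpr (Nat.pos_of_ne_zero hm0)
      by_cases h2m : 2 ∣ m
      · rw [Nat.totient_mul_of_prime_of_dvd Nat.prime_two h2m]
        have := ih m hmlt
        nlinarith
      · have hcop : Nat.Coprime 2 m := (Nat.Prime.coprime_iff_not_dvd Nat.prime_two).mpr h2m
        rw [Nat.totient_mul hcop, Nat.totient_two, one_mul]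
        have hmodd : Odd m := Nat.odd_iff.mpr (by omega)
        have := aux_odd_le_totient_sq m hmodd
        nlinarith
    · have := aux_odd_le_totient_sq d ho
      nlinarith

private lemma aux_mem_small (d : ℕ) (h2 : 2 ≤ d) (h4 : d.totient ≤ 4) :
    d ∈ ({2, 3, 4, 5, 6, 8, 10, 12} : Finset ℕ) := by
  have h32 : d ≤ 32 := le_trans (aux_le_two_mul_totient_sq d) (by nlinarith)
  have key : ∀ x ∈ Finset.Icc 2 32, x.totient ≤ 4 →
      x ∈ ({2, 3, 4, 5, 6, 8, 10, 12} : Finset ℕ) := by decide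
  exact key d (Finset.mem_Icc.mpr ⟨h2, h32⟩) h4

set_option maxRecDepth 10000 in
private lemma aux_combinatorial : ∀ S ∈ ({2, 3, 4, 5, 6, 8, 10, 12} : Finset ℕ).powerset,
    (∑ d ∈ S, Nat.totient d ≤ 4) →
    ((∀ d ∈ S, d ∣ 8) ∨ (∀ d ∈ S, d ∣ 10) ∨ (∀ d ∈ S, d ∣ 12)) := by decide

/-- From the proof of Lemma 3.1 (case N = 4): an element of finite order of `GL(V)`,
`dim_ℚ V = 4`, with no nonzero fixed vector has order dividing `8`, `10`, or `12`. -/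
theorem stmt_9 {V : Type*} [AddCommGroup V] [Module ℚ V]
    (hdim : Module.finrank ℚ V = 4)
    (τ : (V →ₗ[ℚ] V)ˣ) (hord : IsOfFinOrder τ)
    (hfix : ∀ v : V, (τ : V →ₗ[ℚ] V) v = v → v = 0) :
    orderOf τ ∣ 8 ∨ orderOf τ ∣ 10 ∨ orderOf τ ∣ 12 := by
  classical
  have hfd : FiniteDimensional ℚ V :=
    Module.finite_of_finrank_pos (by rw [hdim]; norm_num)
  set f : Module.End ℚ V := (τ : V →ₗ[ℚ] V) with hfdef
  set n := orderOf τ with hn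
  have hnpos : 0 < n := hord.orderOf_pos
  have hfn : f ^ n = 1 := by
    have h := pow_orderOf_eq_one τ
    have h2 := congrArg Units.val h
    simpa only [Units.val_pow_eq_pow_val, Units.val_one] using h2
  set m := minpoly ℚ f with hm
  have hint : IsIntegral ℚ f :=
    ⟨f.charpoly, f.charpoly_monic, f.aeval_self_charpoly⟩
  have hm0 : m ≠ 0 := minpoly.ne_zero hint
  have haevalm : aeval f m = 0 := minpoly.aeval ℚ f
  have hmdvd : m ∣ X ^ n - 1 := by
    apply minpoly.dvd
    simp [aeval_X_pow, hfn]
  have hdeg : m.natDegree ≤ 4 := by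
    calc m.natDegree ≤ f.charpoly.natDegree :=
          natDegree_le_of_dvd (LinearMap.minpoly_dvd_charpoly f) (f.charpoly_monic).ne_zero
      _ = 4 := by rw [f.charpoly_natDegree, hdim]
  set S := n.divisors.filter (fun d => cyclotomic d ℚ ∣ m) with hS
  -- m divides the product of cyclotomics indexed by S
  have hprod : m ∣ ∏ d ∈ S, cyclotomic d ℚ := by
    have hsub : S ⊆ n.divisors := Finset.filter_subset _ _
    have h1 : m ∣ (∏ d ∈ n.divisors \ S, cyclotomic d ℚ) * ∏ d ∈ S, cyclotomic d ℚ := by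
      rw [Finset.prod_sdiff hsub, prod_cyclotomic_eq_X_pow_sub_one hnpos]
      exact hmdvd
    have h2 : IsCoprime m (∏ d ∈ n.divisors \ S, cyclotomic d ℚ) := by
      apply IsCoprime.prod_right
      intro d hd
      rw [Finset.mem_sdiff, hS, Finset.mem_filter] at hd
      have hnd : ¬ cyclotomic d ℚ ∣ m := fun h => hd.2 ⟨hd.1, h⟩
      have hirr : Irreducible (cyclotomic d ℚ) :=
        cyclotomic.irreducible_rat (Nat.pos_of_mem_divisors hd.1)
      exact (hirr.coprime_iff_not_dvd.mpr hnd).symm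
    rw [mul_comm] at h1
    exact h2.dvd_of_dvd_mul_right h1
  have hpairwise : (↑S : Set ℕ).Pairwise (Function.onFun IsCoprime fun d => cyclotomic d ℚ) :=
    fun a _ b _ hab => cyclotomic.isCoprime_rat hab
  -- 1 ∉ S
  have hS1 : (1 : ℕ) ∉ S := by
    intro h1
    have hd : cyclotomic 1 ℚ ∣ m := (Finset.mem_filter.mp h1).2
    rw [cyclotomic_one] at hd
    have hroot : m.IsRoot 1 := by
      have : X - C (1 : ℚ) ∣ m := by simpa using hd
      exact dvd_iff_isRoot.mp this
    obtain ⟨v, hv⟩ := (Module.End.hasEigenvalue_of_isRoot hroot).exists_hasEigenvector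
    have hfv : f v = v := by
      have := hv.apply_eq_smul
      simpa using this
    exact hv.right (hfix v hfv)
  -- sum of totients over S is at most 4
  have hsum : ∑ d ∈ S, Nat.totient d ≤ 4 := by
    have hPd : (∏ d ∈ S, cyclotomic d ℚ) ∣ m :=
      Finset.prod_dvd_of_coprime hpairwise (fun d hd => (Finset.mem_filter.mp hd).2)
    have hle := natDegree_le_of_dvd hPd hm0
    rw [natDegree_prod _ _ (fun d hd =>
      cyclotomic_ne_zero d ℚ)] at hle
    calc ∑ d ∈ S, Nat.totient d = ∑ d ∈ S, (cyclotomic d ℚ).natDegree := by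
          refine Finset.sum_congr rfl (fun d hd => ?_)
          rw [natDegree_cyclotomic]
      _ ≤ 4 := le_trans hle hdeg
  -- n divides L := lcm S
  set L := S.lcm id with hL
  have hnL : n ∣ L := by
    have hPL : (∏ d ∈ S, cyclotomic d ℚ) ∣ X ^ L - 1 := by
      apply Finset.prod_dvd_of_coprime hpairwise
      intro d hd
      have hdL : d ∣ L := Finset.dvd_lcm hd
      obtain ⟨c, hc⟩ := hdL
      have h1 : cyclotomic d ℚ ∣ X ^ d - 1 := cyclotomic.dvd_X_pow_sub_one d ℚ
      have h2 : (X : ℚ[X]) ^ d - 1 ∣ X ^ L - 1 := by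
        have := sub_dvd_pow_sub_pow ((X : ℚ[X]) ^ d) 1 c
        rwa [← pow_mul, one_pow, ← hc] at this
      exact h1.trans h2
    have hmL : m ∣ X ^ L - 1 := hprod.trans hPL
    obtain ⟨q, hq⟩ := hmL
    have hfL : f ^ L = 1 := by
      have := congrArg (aeval f) hq
      rw [map_mul, haevalm, zero_mul, map_sub, aeval_X_pow, map_one] at this
      have : f ^ L = 1 := by
        have := sub_eq_zero.mp this
        simpa using this
      exact this
    apply orderOf_dvd_of_pow_eq_one
    apply Units.ext
    simpa [Units.val_pow_eq_pow_val] using hfL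
  -- S is contained in the small set
  have hsub : S ∈ ({2, 3, 4, 5, 6, 8, 10, 12} : Finset ℕ).powerset := by
    rw [Finset.mem_powerset]
    intro d hd
    have hpos : 0 < d := Nat.pos_of_mem_divisors (Finset.mem_filter.mp hd).1
    have hne1 : d ≠ 1 := fun h => hS1 (h ▸ hd)
    have h2 : 2 ≤ d := by omega
    have h4 : d.totient ≤ 4 :=
      le_trans (Finset.single_le_sum (fun i _ => Nat.zero_le _) hd) hsum
    exact aux_mem_small d h2 h4
  rcases aux_combinatorial S hsub hsum with h | h | h
  · exact Or.inl (hnL.trans (Finset.lcm_dvd (fun d hd => h d hd)))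
  · exact Or.inr (Or.inl (hnL.trans (Finset.lcm_dvd (fun d hd => h d hd))))
  · exact Or.inr (Or.inr (hnL.trans (Finset.lcm_dvd (fun d hd => h d hd))))
end

section
/- Let V be a vector space over ℚ with dim V = 4 and let G₁ be a subgroup of GL(V) isomorphic to ℤ/3 × ℤ/3. Then the fixed subspace V^{G₁} is zero. -/
open Module


theorem even_aux {U : Type*} [AddCommGroup U] [Module ℚ U] [FiniteDimensional ℚ U]
    (J : Module.End ℚ U) (hJ : J^2 + J + 1 = 0) : Even (finrank ℚ U) := by
  set M : Module.End ℚ U := (2:ℚ) • J + 1 with hM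
  have hM2 : M * M = (-3 : ℚ) • 1 := by
    ext x
    have h0 : J (J x) + J x + x = 0 := by
      have := congrArg (fun f => f x) hJ
      simpa [pow_two, Module.End.mul_apply] using this
    have h1 : J (J x) = -(J x + x) := by
      refine neg_eq_of_add_eq_zero_left ?_ |>.symm
      rw [← h0]; abel
    simp only [hM, Module.End.mul_apply, LinearMap.add_apply, LinearMap.smul_apply,
      Module.End.one_apply, map_add, map_smul, h1]
    module
  have hdet : (LinearMap.det M)^2 = (-3 : ℚ)^(finrank ℚ U) := by
    rw [pow_two, ← LinearMap.det_comp, show M ∘ₗ M = M * M from rfl, hM2, LinearMap.det_smul]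
    simp
  rcases Nat.even_or_odd (finrank ℚ U) with he | ho
  · exact he
  · exfalso
    have : (0:ℚ) ≤ (-3:ℚ)^(finrank ℚ U) := hdet ▸ sq_nonneg _
    have hneg : (-3:ℚ)^(finrank ℚ U) < 0 := Odd.pow_neg ho (by norm_num)
    linarith



section helpers
variable {V : Type*} [AddCommGroup V] [Module ℚ V]

theorem pt_of_cube (T : V →ₗ[ℚ] V) (hT3 : T ^ 3 = 1) (w : V) : T (T (T w)) = w := by
  have := congrArg (fun f => f w) hT3
  simpa [pow_succ, Module.End.mul_apply] using this

theorem mem_omega_ker (T : V →ₗ[ℚ] V) (x : V) :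
    x ∈ LinearMap.ker (T ^ 2 + T + 1) ↔ T (T x) + T x + x = 0 := by
  rw [LinearMap.mem_ker]
  constructor <;> intro h <;>
    simpa [pow_two, Module.End.mul_apply, LinearMap.add_apply, Module.End.one_apply] using h

theorem inf_ker_bot (T : V →ₗ[ℚ] V) :
    LinearMap.ker (T - 1) ⊓ LinearMap.ker (T ^ 2 + T + 1) = ⊥ := by
  rw [eq_bot_iff]
  rintro x ⟨hx1, hx2⟩
  simp only [SetLike.mem_coe, LinearMap.mem_ker] at hx1
  have hx2' := (mem_omega_ker T x).mp hx2
  have h1 : T x = x := by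
    have : T x - x = 0 := by simpa [LinearMap.sub_apply] using hx1
    rw [sub_eq_zero] at this; exact this
  rw [h1, h1] at hx2'
  have h3 : (3 : ℚ) • x = 0 := by rw [show (3:ℚ) • x = x + x + x by module]; exact hx2'
  simpa [Submodule.mem_bot] using (smul_eq_zero.mp h3).resolve_left (by norm_num)

theorem omega_ker_ne_bot (T : V →ₗ[ℚ] V) (hT3 : T ^ 3 = 1) (hTne : T ≠ 1) :
    LinearMap.ker (T ^ 2 + T + 1) ≠ ⊥ := by
  obtain ⟨w, hw⟩ : ∃ w, T w ≠ w := by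
    by_contra hcon
    push_neg at hcon
    exact hTne (LinearMap.ext fun w => by simp [hcon w])
  intro hbot
  apply sub_ne_zero.mpr hw
  rw [← Submodule.mem_bot (R := ℚ), ← hbot, mem_omega_ker]
  have h3 := pt_of_cube T hT3 w
  simp only [map_sub]
  rw [h3]
  abel

theorem omega_ker_inv {T S : V →ₗ[ℚ] V} (hc : ∀ y, T (S y) = S (T y)) :
    ∀ x ∈ LinearMap.ker (T ^ 2 + T + 1), S x ∈ LinearMap.ker (T ^ 2 + T + 1) := by
  intro x hx
  rw [mem_omega_ker] at hx ⊢
  rw [hc, hc, ← map_add, ← map_add, hx, map_zero]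

theorem omega_even [FiniteDimensional ℚ V] (T : V →ₗ[ℚ] V) (hT3 : T ^ 3 = 1) :
    Even (finrank ℚ (LinearMap.ker (T ^ 2 + T + 1))) := by
  set W := LinearMap.ker (T ^ 2 + T + 1)
  have hinv : ∀ x ∈ W, T x ∈ W := omega_ker_inv (fun y => rfl)
  set J := T.restrict hinv with hJdef
  apply even_aux J
  ext x
  have hx := (mem_omega_ker T x.1).mp x.2
  have hco : ∀ y : W, (J y : V) = T y := fun y => rfl
  simp only [pow_two, Module.End.mul_apply, LinearMap.add_apply, Module.End.one_apply,
    Submodule.coe_add, hco, LinearMap.zero_apply, Submodule.coe_zero]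
  exact hx

end helpers

open Module
theorem scalar_aux {W : Type*} [AddCommGroup W] [Module ℚ W] [FiniteDimensional ℚ W]
    (hrk : finrank ℚ W = 2) (J B : Module.End ℚ W)
    (hJ : J ^ 2 + J + 1 = 0) (hcomm : J * B = B * J) (hB3 : B ^ 3 = 1) :
    B = 1 ∨ B = J ∨ B = J ^ 2 := by
  have hJpt : ∀ x : W, J (J x) + J x + x = 0 := by
    intro x
    have := congrArg (fun f => f x) hJ
    simpa [pow_two, Module.End.mul_apply] using this
  have hJ2 : J * J = -J - 1 := by
    have h := hJ
    rw [pow_two, add_assoc] at h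
    rw [neg_eq_of_add_eq_zero_left h |>.symm]
    abel
  have hJ2' : J * J = (-1 : ℚ) • 1 + (-1 : ℚ) • J := by rw [hJ2]; module
  have : Nontrivial W := Module.nontrivial_of_finrank_pos (R := ℚ) (by omega)
  obtain ⟨w₀, hw₀⟩ := exists_ne (0 : W)
  have hind : ∀ s t : ℚ, s • w₀ + t • J w₀ = 0 → s = 0 ∧ t = 0 := by
    intro s t hst
    by_cases ht : t = 0
    · subst ht
      simp only [zero_smul, add_zero, smul_eq_zero] at hst
      exact ⟨hst.resolve_right hw₀, rfl⟩
    · exfalso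
      have h1 : t • J w₀ = -(s • w₀) := by rw [eq_neg_iff_add_eq_zero, add_comm]; exact hst
      have h2 : J w₀ = t⁻¹ • (t • J w₀) := by rw [smul_smul, inv_mul_cancel₀ ht, one_smul]
      obtain ⟨r, hJw⟩ : ∃ r : ℚ, J w₀ = r • w₀ :=
        ⟨-(t⁻¹ * s), by rw [h2, h1, smul_neg, smul_smul, ← neg_smul]⟩
      have h0 := hJpt w₀
      rw [hJw, map_smul, hJw, smul_smul] at h0
      have hco : (r * r + r + 1) • w₀ = 0 := by rw [← h0]; module
      rcases smul_eq_zero.mp hco with hc | hww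
      · nlinarith [sq_nonneg (2 * r + 1)]
      · exact hw₀ hww
  have hli : LinearIndependent ℚ ![w₀, J w₀] := by
    rw [LinearIndependent.pair_iff]
    exact hind
  let b := basisOfLinearIndependentOfCardEqFinrank hli (by simp [hrk])
  have hb : ⇑b = ![w₀, J w₀] := coe_basisOfLinearIndependentOfCardEqFinrank hli _
  have htop : Submodule.span ℚ ({w₀, J w₀} : Set W) = ⊤ := by
    have h := b.span_eq
    rw [hb] at h
    rw [show Set.range ![w₀, J w₀] = {w₀, J w₀} by
      ext x; simp [Fin.exists_fin_two, or_comm]] at h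
    exact h
  obtain ⟨p, q, hpq⟩ := Submodule.mem_span_pair.mp
    (htop ▸ Submodule.mem_top : B w₀ ∈ Submodule.span ℚ ({w₀, J w₀} : Set W))
  -- B = p•1 + q•J
  set D : Module.End ℚ W := p • 1 + q • J with hD
  have hBw : B w₀ = D w₀ := by
    rw [← hpq]; simp [hD]
  have hBD : B = D := by
    apply b.ext
    intro i
    rw [hb]
    fin_cases i
    · simpa using hBw.symm ▸ hBw
    · show B (J w₀) = D (J w₀)
      have h1 : B (J w₀) = J (B w₀) := by
        have := congrArg (fun f => f w₀) hcomm
        simpa [Module.End.mul_apply] using this.symm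
      rw [h1, hBw]
      simp only [hD, LinearMap.add_apply, LinearMap.smul_apply, Module.End.one_apply,
        map_add, map_smul]
  -- multiplication formula
  have key : ∀ a c d e : ℚ, (a • (1 : Module.End ℚ W) + c • J) * (d • 1 + e • J)
      = (a * d - c * e) • 1 + (a * e + c * d - c * e) • J := by
    intro a c d e
    simp only [mul_add, add_mul, smul_mul_assoc, mul_smul_comm, one_mul, mul_one, hJ2',
      smul_smul, smul_add]
    module
  -- coefficients are determined
  have eq12 : ∀ a c d e : ℚ, a • (1 : Module.End ℚ W) + c • J = d • 1 + e • J →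
      a = d ∧ c = e := by
    intro a c d e hace
    have := congrArg (fun f => f w₀) hace
    simp only [LinearMap.add_apply, LinearMap.smul_apply, Module.End.one_apply] at this
    have h0 : (a - d) • w₀ + (c - e) • J w₀ = 0 := by
      rw [show (a - d) • w₀ + (c - e) • J w₀
          = (a • w₀ + c • J w₀) - (d • w₀ + e • J w₀) by module, this, sub_self]
    obtain ⟨h1, h2⟩ := hind _ _ h0
    exact ⟨by linarith, by linarith⟩
  -- compute B^3
  have hD3 : B ^ 3 = ((p * p - q * q) * p - (p * q + q * p - q * q) * q) • 1
      + ((p * p - q * q) * q + (p * q + q * p - q * q) * p - (p * q + q * p - q * q) * q) • J := by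
    rw [hBD, pow_succ, pow_two, key, key]
  have h1' : (1 : Module.End ℚ W) = (1 : ℚ) • 1 + (0 : ℚ) • J := by module
  rw [h1'] at hB3
  obtain ⟨ha, hb3⟩ := eq12 _ _ _ _ (hD3.symm.trans hB3)
  have hfac : p * q * (p - q) = 0 := by linear_combination hb3 / 3
  rcases mul_eq_zero.mp hfac with hpq0 | hpqe
  · rcases mul_eq_zero.mp hpq0 with hp | hq
    · -- p = 0 : q^3 = 1, B = J
      right; left
      have hq1 : q = 1 := by
        have h3 : (q - 1) * (q ^ 2 + q + 1) = 0 := by subst hp; linear_combination ha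
        rcases mul_eq_zero.mp h3 with h | h
        · linarith
        · nlinarith [sq_nonneg (2 * q + 1)]
      rw [hBD, hD, hp, hq1]
      module
    · -- q = 0 : p^3 = 1, B = 1
      left
      have hp1 : p = 1 := by
        have h3 : (p - 1) * (p ^ 2 + p + 1) = 0 := by subst hq; linear_combination ha
        rcases mul_eq_zero.mp h3 with h | h
        · linarith
        · nlinarith [sq_nonneg (2 * p + 1)]
      rw [hBD, hD, hp1, hq]
      module
  · -- p = q : p = -1, B = J^2
    right; right
    have hq' : q = p := by linarith [sub_eq_zero.mp hpqe]
    have hp1 : p = -1 := by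
      have h3 : (p + 1) * (p ^ 2 - p + 1) = 0 := by rw [hq'] at ha; linear_combination -ha
      rcases mul_eq_zero.mp h3 with h | h
      · linarith
      · exfalso
        have h4 : (2 * p - 1) ^ 2 = -3 := by linear_combination 4 * h
        linarith [sq_nonneg (2 * p - 1)]
    have hJsq : J ^ 2 = (-1 : ℚ) • 1 + (-1 : ℚ) • J := by rw [pow_two, hJ2']
    rw [hBD, hD, hq', hp1, hJsq]
/-- From the proof of Lemma 3.1 (case N = 4): a subgroup of `GL(V)`, `dim_ℚ V = 4`,
isomorphic to `ℤ/3 × ℤ/3`, has zero fixed subspace. -/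
theorem stmt_13 {V : Type*} [AddCommGroup V] [Module ℚ V]
    (hdim : Module.finrank ℚ V = 4)
    (G₁ : Subgroup ((V →ₗ[ℚ] V)ˣ))
    (hiso : Nonempty (G₁ ≃* Multiplicative (ZMod 3 × ZMod 3))) :
    ∀ v : V, (∀ g ∈ G₁, (g : V →ₗ[ℚ] V) v = v) → v = 0 := by
  intro v hv
  by_contra hv0
  obtain ⟨e⟩ := hiso
  have hfd : FiniteDimensional ℚ V := FiniteDimensional.of_finrank_pos (by omega)
  set g : G₁ := e.symm (Multiplicative.ofAdd (1, 0)) with hgdef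
  set hh : G₁ := e.symm (Multiplicative.ofAdd (0, 1)) with hhdef
  have hcube : ∀ x : G₁, x ^ 3 = 1 := by
    intro x
    apply e.injective
    rw [map_pow, map_one]
    exact (by decide : ∀ y : Multiplicative (ZMod 3 × ZMod 3), y ^ 3 = 1) (e x)
  have hcomm_g : g * hh = hh * g := by
    apply e.injective
    rw [map_mul, map_mul]
    exact mul_comm _ _
  set φ : G₁ →* (V →ₗ[ℚ] V) := (Units.coeHom (V →ₗ[ℚ] V)).comp G₁.subtype with hφdef
  have hφinj : Function.Injective φ := fun x y hxy => Subtype.ext (Units.ext hxy)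
  set A : V →ₗ[ℚ] V := φ g with hA
  set B : V →ₗ[ℚ] V := φ hh with hB
  have hfixφ : ∀ x : G₁, φ x v = v := fun x => hv x.1 x.2
  have hA3 : A ^ 3 = 1 := by rw [hA, ← map_pow, hcube, map_one]
  have hB3 : B ^ 3 = 1 := by rw [hB, ← map_pow, hcube, map_one]
  have hABm : A * B = B * A := by
    have := congrArg φ hcomm_g
    simpa [map_mul, ← hA, ← hB] using this
  have hAB : ∀ y, A (B y) = B (A y) := by
    intro y
    have := congrArg (fun f => f y) hABm
    simpa [Module.End.mul_apply] using this
  have hgne : g ≠ 1 := by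
    intro h
    have := congrArg e h
    rw [hgdef, MulEquiv.apply_symm_apply, map_one] at this
    exact (by decide : Multiplicative.ofAdd ((1 : ZMod 3), (0 : ZMod 3)) ≠ 1) this
  have hAne : A ≠ 1 := fun h1 => hgne (hφinj (by rw [map_one, ← hA, h1]))
  set W : Submodule ℚ V := LinearMap.ker (A ^ 2 + A + 1) with hWdef
  set F : Submodule ℚ V := LinearMap.ker (A - 1) with hFdef
  have hvF : v ∈ F := by
    rw [hFdef, LinearMap.mem_ker, LinearMap.sub_apply, Module.End.one_apply, hfixφ g, sub_self]
  -- finrank W = 2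
  have hWeven := omega_even A hA3
  have hWne := omega_ker_ne_bot A hA3 hAne
  rw [← hWdef] at hWeven hWne
  have hF1 : 1 ≤ finrank ℚ F := by
    have hle : (ℚ ∙ v) ≤ F := by
      rw [Submodule.span_singleton_le_iff_mem]; exact hvF
    calc 1 = finrank ℚ (ℚ ∙ v) := (finrank_span_singleton hv0).symm
    _ ≤ finrank ℚ F := Submodule.finrank_mono hle
  have hsum : finrank ℚ F + finrank ℚ W ≤ 4 := by
    have h1 := Submodule.finrank_sup_add_finrank_inf_eq F W
    rw [inf_ker_bot A, finrank_bot, add_zero] at h1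
    rw [← h1, ← hdim]
    exact Submodule.finrank_le _
  have hWpos : 0 < finrank ℚ W := by
    rcases Nat.eq_zero_or_pos (finrank ℚ W) with h | h
    · exact absurd (Submodule.finrank_eq_zero.mp h) hWne
    · exact h
  have hWrk : finrank ℚ W = 2 := by
    obtain ⟨k, hk⟩ := hWeven
    omega
  -- restrictions
  have hWA : ∀ x ∈ W, A x ∈ W := omega_ker_inv (fun y => rfl)
  have hWB : ∀ x ∈ W, B x ∈ W := omega_ker_inv hAB
  set J : W →ₗ[ℚ] W := A.restrict hWA with hJdef
  set B' : W →ₗ[ℚ] W := B.restrict hWB with hB'def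
  have hcoJ : ∀ y : W, (J y : V) = A y := fun y => rfl
  have hcoB : ∀ y : W, (B' y : V) = B y := fun y => rfl
  have hJ : J ^ 2 + J + 1 = 0 := by
    ext x
    have hx := (mem_omega_ker A x.1).mp x.2
    simp only [pow_two, Module.End.mul_apply, LinearMap.add_apply, Module.End.one_apply,
      Submodule.coe_add, hcoJ, LinearMap.zero_apply, Submodule.coe_zero]
    exact hx
  have hcommJ : J * B' = B' * J := by
    ext x
    simp only [Module.End.mul_apply, hcoJ, hcoB]
    exact (hAB x).symm ▸ rfl
  have hB'3 : B' ^ 3 = 1 := by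
    ext x
    simp only [pow_succ, pow_zero, one_mul, Module.End.mul_apply, Module.End.one_apply, hcoB]
    exact pt_of_cube B hB3 x
  -- main case analysis
  have hfinal : ∀ C : G₁, C ≠ 1 → (∀ x ∈ W, φ C x = x) → False := by
    intro C hCne hCW
    set Cm : V →ₗ[ℚ] V := φ C with hCm
    have hC3 : Cm ^ 3 = 1 := by rw [hCm, ← map_pow, hcube, map_one]
    have hCmne : Cm ≠ 1 := fun h => hCne (hφinj (by rw [map_one, ← hCm, h]))
    set Wc : Submodule ℚ V := LinearMap.ker (Cm ^ 2 + Cm + 1) with hWcdef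
    set Kc : Submodule ℚ V := LinearMap.ker (Cm - 1) with hKcdef
    have hWc2 : 2 ≤ finrank ℚ Wc := by
      have heven := omega_even Cm hC3
      have hne := omega_ker_ne_bot Cm hC3 hCmne
      rw [← hWcdef] at heven hne
      have hpos : 0 < finrank ℚ Wc := by
        rcases Nat.eq_zero_or_pos (finrank ℚ Wc) with h | h
        · exact absurd (Submodule.finrank_eq_zero.mp h) hne
        · exact h
      obtain ⟨k, hk⟩ := heven
      omega
    have hWKc : W ≤ Kc := by
      intro x hx
      rw [hKcdef, LinearMap.mem_ker, LinearMap.sub_apply, Module.End.one_apply, hCW x hx,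
        sub_self]
    have hvKc : (ℚ ∙ v) ≤ Kc := by
      rw [Submodule.span_singleton_le_iff_mem, hKcdef, LinearMap.mem_ker, LinearMap.sub_apply,
        Module.End.one_apply, hfixφ C, sub_self]
    have hWv_bot : W ⊓ (ℚ ∙ v) = ⊥ := by
      rw [eq_bot_iff]
      rintro x ⟨hxW, hxs⟩
      simp only [SetLike.mem_coe] at hxW hxs
      obtain ⟨t, rfl⟩ := Submodule.mem_span_singleton.mp hxs
      rcases eq_or_ne t 0 with ht | ht
      · simp [ht]
      · exfalso
        have hvW : v ∈ W := by
          have : t⁻¹ • (t • v) ∈ W := Submodule.smul_mem _ _ hxW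
          rwa [smul_smul, inv_mul_cancel₀ ht, one_smul] at this
        have : v ∈ F ⊓ W := ⟨hvF, hvW⟩
        rw [inf_ker_bot A] at this
        exact hv0 (Submodule.mem_bot ℚ |>.mp this)
    have hsup3 : finrank ℚ ↑(W ⊔ (ℚ ∙ v)) = 3 := by
      have h1 := Submodule.finrank_sup_add_finrank_inf_eq W (ℚ ∙ v)
      rw [hWv_bot, finrank_bot, add_zero, hWrk, finrank_span_singleton hv0] at h1
      exact h1
    have hKc3 : 3 ≤ finrank ℚ Kc := by
      rw [← hsup3]
      exact Submodule.finrank_mono (sup_le hWKc hvKc)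
    have hsumc : finrank ℚ Kc + finrank ℚ Wc ≤ 4 := by
      have h1 := Submodule.finrank_sup_add_finrank_inf_eq Kc Wc
      rw [inf_ker_bot Cm, finrank_bot, add_zero] at h1
      rw [← h1, ← hdim]
      exact Submodule.finrank_le _
    omega
  have hhne : hh ≠ 1 := by
    intro h
    have := congrArg e h
    rw [hhdef, MulEquiv.apply_symm_apply, map_one] at this
    exact (by decide : Multiplicative.ofAdd ((0 : ZMod 3), (1 : ZMod 3)) ≠ 1) this
  rcases scalar_aux hWrk J B' hJ hcommJ hB'3 with hc | hc | hc
  · -- B' = 1 : C = hh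
    apply hfinal hh hhne
    intro x hx
    have := congrArg (fun f => (f ⟨x, hx⟩ : V)) hc
    simpa [hcoB] using this
  · -- B' = J : C = hh * g * g
    have hBW : ∀ x (hx : x ∈ W), B x = A x := by
      intro x hx
      have := congrArg (fun f => (f ⟨x, hx⟩ : V)) hc
      simpa [hcoB, hcoJ] using this
    apply hfinal (hh * g * g)
    · intro h
      have := congrArg e h
      rw [map_mul, map_mul, hgdef, hhdef, MulEquiv.apply_symm_apply,
        MulEquiv.apply_symm_apply, map_one] at this
      exact (by decide : Multiplicative.ofAdd ((0:ZMod 3), (1:ZMod 3)) *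
        Multiplicative.ofAdd ((1:ZMod 3), (0:ZMod 3)) *
        Multiplicative.ofAdd ((1:ZMod 3), (0:ZMod 3)) ≠ 1) this
    · intro x hx
      have h1 : φ (hh * g * g) x = B (A (A x)) := by
        rw [map_mul, map_mul]
        simp [Module.End.mul_apply]
        rfl
      rw [h1, hBW _ (hWA _ (hWA _ hx))]
      exact pt_of_cube A hA3 x
  · -- B' = J ^ 2 : C = hh * g
    have hBW : ∀ x (hx : x ∈ W), B x = A (A x) := by
      intro x hx
      have := congrArg (fun f => (f ⟨x, hx⟩ : V)) hc
      simpa [pow_two, Module.End.mul_apply, hcoB, hcoJ] using this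
    apply hfinal (hh * g)
    · intro h
      have := congrArg e h
      rw [map_mul, hgdef, hhdef, MulEquiv.apply_symm_apply,
        MulEquiv.apply_symm_apply, map_one] at this
      exact (by decide : Multiplicative.ofAdd ((0:ZMod 3), (1:ZMod 3)) *
        Multiplicative.ofAdd ((1:ZMod 3), (0:ZMod 3)) ≠ 1) this
    · intro x hx
      have h1 : φ (hh * g) x = B (A x) := by
        rw [map_mul]
        simp [Module.End.mul_apply]
        rfl
      rw [h1, hBW _ (hWA _ hx)]
      exact pt_of_cube A hA3 x
end

section
/- Let V be a vector space over ℚ with dim V = 4 and let G be a finite subgroup of GL(V) such that every element of G has a nonzero fixed vector. Then G contains no element of order 5, no element of order 8, and no element of order 9. -/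
open Polynomial

private lemma cyc_fact {n m : ℕ} (hn : 0 < n) (hm : 0 < m)
    (hdiv : Nat.divisors n = insert n (Nat.divisors m)) (hnm : n ∉ Nat.divisors m) :
    (X : ℚ[X]) ^ n - 1 = (X ^ m - 1) * cyclotomic n ℚ := by
  rw [← prod_cyclotomic_eq_X_pow_sub_one hn ℚ, ← prod_cyclotomic_eq_X_pow_sub_one hm ℚ,
    hdiv, Finset.prod_insert hnm, mul_comm]

private lemma master {V : Type*} [AddCommGroup V] [Module ℚ V] [FiniteDimensional ℚ V]
    (hdim : Module.finrank ℚ V = 4) (g : (V →ₗ[ℚ] V)ˣ)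
    (v : V) (hv : v ≠ 0) (hfv : (g : V →ₗ[ℚ] V) v = v)
    (n m : ℕ) (hn : 0 < n) (hm : 0 < m) (hmn : m < n)
    (hfact : (X : ℚ[X]) ^ n - 1 = (X ^ m - 1) * cyclotomic n ℚ)
    (htot : 4 ≤ Nat.totient n) : orderOf g ≠ n := by
  intro horder
  set f : Module.End ℚ V := (g : V →ₗ[ℚ] V) with hf
  set p : ℚ[X] := minpoly ℚ f with hp
  have hint : IsIntegral ℚ f := Algebra.IsIntegral.isIntegral f
  have hpne : p ≠ 0 := minpoly.ne_zero hint
  -- f ^ n = 1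
  have hfn : f ^ n = 1 := by
    have := pow_orderOf_eq_one g
    rw [horder] at this
    have := congrArg (Units.val) this
    rwa [Units.val_pow_eq_pow_val] at this
  -- p divides X^n - 1
  have hdvd : p ∣ (X : ℚ[X]) ^ n - 1 := by
    apply minpoly.dvd
    rw [map_sub, map_pow, aeval_X, map_one, hfn, sub_self]
  -- (X - 1) divides p via the eigenvector
  have heig : Module.End.HasEigenvalue f 1 :=
    Module.End.hasEigenvalue_of_hasEigenvector
      ⟨Module.End.mem_eigenspace_iff.mpr (by simpa using hfv), hv⟩
  have hroot : p.IsRoot 1 := Module.End.isRoot_of_hasEigenvalue heig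
  have hX1 : (X - C (1 : ℚ)) ∣ p := dvd_iff_isRoot.mpr hroot
  -- degree bound
  have hdeg : p.natDegree ≤ 4 := by
    calc p.natDegree ≤ f.charpoly.natDegree :=
          natDegree_le_of_dvd (LinearMap.minpoly_dvd_charpoly f)
            (f.charpoly_monic.ne_zero)
      _ = 4 := by rw [f.charpoly_natDegree, hdim]
  have hcyc_irr : Irreducible (cyclotomic n ℚ) := cyclotomic.irreducible_rat hn
  by_cases hc : cyclotomic n ℚ ∣ p
  · -- then (X - 1) * cyclotomic n divides p, degree too large
    have hnd : ¬ cyclotomic n ℚ ∣ (X - C (1 : ℚ)) := by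
      intro h
      have := natDegree_le_of_dvd h (X_sub_C_ne_zero 1)
      rw [natDegree_cyclotomic, natDegree_X_sub_C] at this
      omega
    have hcop : IsCoprime (cyclotomic n ℚ) (X - C (1 : ℚ)) :=
      (hcyc_irr.coprime_iff_not_dvd).mpr hnd
    have hmul : (X - C (1 : ℚ)) * cyclotomic n ℚ ∣ p :=
      hcop.symm.mul_dvd hX1 hc
    have := natDegree_le_of_dvd hmul hpne
    rw [natDegree_mul (X_sub_C_ne_zero 1) hcyc_irr.ne_zero,
      natDegree_X_sub_C, natDegree_cyclotomic] at this
    omega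
  · -- then p divides X^m - 1, so g^m = 1, contradicting orderOf g = n
    have hcop : IsCoprime p (cyclotomic n ℚ) :=
      ((hcyc_irr.coprime_iff_not_dvd).mpr hc).symm
    have hdvd2 : p ∣ (X : ℚ[X]) ^ m - 1 := by
      apply hcop.dvd_of_dvd_mul_right
      rwa [← hfact]
    have hfm : f ^ m = 1 := by
      have : aeval f ((X : ℚ[X]) ^ m - 1) = 0 := by
        obtain ⟨c, hc'⟩ := hdvd2
        rw [hc', map_mul, minpoly.aeval, zero_mul]
      rw [map_sub, map_pow, aeval_X, map_one, sub_eq_zero] at this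
      exact this
    have hgm : g ^ m = 1 := Units.ext (by rwa [Units.val_pow_eq_pow_val, Units.val_one])
    have := orderOf_dvd_of_pow_eq_one hgm
    rw [horder] at this
    exact absurd (Nat.le_of_dvd hm this) (by omega)

/-- From the proof of Lemma 3.1 (case N = 4): if `G` is a finite subgroup of `GL(V)`,
`dim_ℚ V = 4`, all of whose elements have a nonzero fixed vector, then `G` contains no
element of order `5`, `8`, or `9`. -/
theorem stmt_14 {V : Type*} [AddCommGroup V] [Module ℚ V]
    (hdim : Module.finrank ℚ V = 4)
    (G : Subgroup ((V →ₗ[ℚ] V)ˣ)) (hfin : (G : Set ((V →ₗ[ℚ] V)ˣ)).Finite)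
    (hfix : ∀ g ∈ G, ∃ v : V, v ≠ 0 ∧ (g : V →ₗ[ℚ] V) v = v) :
    ∀ g ∈ G, orderOf g ≠ 5 ∧ orderOf g ≠ 8 ∧ orderOf g ≠ 9 := by
  have : FiniteDimensional ℚ V := Module.finite_of_finrank_pos (by omega)
  intro g hg
  obtain ⟨v, hv, hfv⟩ := hfix g hg
  refine ⟨?_, ?_, ?_⟩
  · exact master hdim g v hv hfv 5 1 (by norm_num) (by norm_num) (by norm_num)
      (cyc_fact (by norm_num) (by norm_num) (by decide) (by decide)) (by decide)
  · exact master hdim g v hv hfv 8 4 (by norm_num) (by norm_num) (by norm_num)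
      (cyc_fact (by norm_num) (by norm_num) (by decide) (by decide)) (by decide)
  · exact master hdim g v hv hfv 9 3 (by norm_num) (by norm_num) (by norm_num)
      (cyc_fact (by norm_num) (by norm_num) (by decide) (by decide)) (by decide)
end
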